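/- arXiv:1703.07496 — 6 statements merged into one kernel-verified Lean document; each statement's English description precedes it below -/
import Mathlib

section
/- For every β ∈ (0,1), the function φ is strictly decreasing on (0,1): if 0 < β < β' < 1 then φ(β) > φ(β'). -/
open MeasureTheory

/-- `I k β = ∫_0^∞ y^{-β} (log y)^k / (1+y) dy`. -/
noncomputable def I (k : ℕ) (β : ℝ) : ℝ :=
  ∫ y in Set.Ioi (0 : ℝ), y ^ (-β) * (Real.log y) ^ k / (1 + y)

/-- `φ(β) = I₁(β) / I₀(β)`. -/
noncomputable def phi (β : ℝ) : ℝ := I 1 β / I 0 β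

/-!
With `δ = β' - β` and the weight `w y = y ^ (-β') / (1 + y)` on `(0, ∞)`, the four integrals
`I 0 β'`, `I 0 β`, `I 1 β'`, `I 1 β` are `∫ w`, `∫ w f`, `∫ w g`, `∫ w f g` for `f y = y ^ δ` and
`g = log`. Chebyshev's symmetrization gives
`2 (∫ w f g ∫ w - ∫ w f ∫ w g) = ∬ w(x) w(y) (f x - f y) (g x - g y)`, which is positive since
`f` and `g` are both strictly increasing; as `I 0 > 0`, this is `φ β > φ β'`.
Convergence comes from `|log y| ^ k ≤ k! ε⁻ᵏ (y ^ ε + y ^ (-ε))`, a consequence of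
`t ^ k / k! ≤ exp t`.
-/

open Real Set
open scoped Nat

lemma abs_log_pow_le {y ε : ℝ} (hy : 0 < y) (hε : 0 < ε) (k : ℕ) :
    |log y| ^ k ≤ k ! / ε ^ k * (y ^ ε + y ^ (-ε)) := by
  have hexp : (ε * |log y|) ^ k / k ! ≤ y ^ ε + y ^ (-ε) :=
    calc (ε * |log y|) ^ k / k ! ≤ exp |log y * ε| := by
          rw [abs_mul, abs_of_pos hε, mul_comm]
          exact pow_div_factorial_le_exp _ (by positivity) k
      _ ≤ y ^ ε + y ^ (-ε) := by
          rw [rpow_def_of_pos hy, rpow_def_of_pos hy, mul_neg]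
          exact exp_abs_le _
  rw [mul_pow, div_le_iff₀ (by positivity)] at hexp
  rw [div_mul_eq_mul_div, le_div_iff₀ (by positivity)]
  linarith

lemma integrableOn_rpow_div_one_add {s : ℝ} (hs₁ : -1 < s) (hs₀ : s < 0) :
    IntegrableOn (fun y : ℝ => y ^ s / (1 + y)) (Ioi 0) := by
  have hmeas : AEStronglyMeasurable (fun y : ℝ => y ^ s / (1 + y)) :=
    (by fun_prop : Measurable _).aestronglyMeasurable
  rw [← Ioc_union_Ioi_eq_Ioi zero_le_one]
  refine IntegrableOn.union ?_ ?_
  · have hdom : IntegrableOn (fun y : ℝ => y ^ s) (Ioc 0 1) :=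
      (intervalIntegrable_iff_integrableOn_Ioc_of_le zero_le_one).1
        (intervalIntegral.intervalIntegrable_rpow' hs₁)
    refine hdom.mono' hmeas.restrict ((ae_restrict_iff' measurableSet_Ioc).2 (.of_forall ?_))
    rintro y ⟨hy, -⟩
    rw [norm_of_nonneg (by positivity)]
    exact div_le_self (by positivity) (by linarith)
  · have hdom : IntegrableOn (fun y : ℝ => y ^ (s - 1)) (Ioi 1) :=
      integrableOn_Ioi_rpow_of_lt (by linarith) one_pos
    refine hdom.mono' hmeas.restrict ((ae_restrict_iff' measurableSet_Ioi).2 (.of_forall ?_))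
    intro y (hy : 1 < y)
    rw [norm_of_nonneg (by positivity), rpow_sub_one (by positivity)]
    exact div_le_div_of_nonneg_left (by positivity) (by linarith) (by linarith)

lemma integrableOn_I_integrand (k : ℕ) {β : ℝ} (hβ₀ : 0 < β) (hβ₁ : β < 1) :
    IntegrableOn (fun y : ℝ => y ^ (-β) * log y ^ k / (1 + y)) (Ioi 0) := by
  obtain ⟨ε, hε, hεβ, hεβ'⟩ : ∃ ε : ℝ, 0 < ε ∧ ε < β ∧ ε < 1 - β :=
    ⟨min β (1 - β) / 2, by positivity, by linarith [min_le_left β (1 - β)],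
      by linarith [min_le_right β (1 - β)]⟩
  have hdom := ((integrableOn_rpow_div_one_add (s := ε - β) (by linarith) (by linarith)).add
    (integrableOn_rpow_div_one_add (s := -ε - β) (by linarith) (by linarith))).const_mul
    (k ! / ε ^ k)
  have hmeas : AEStronglyMeasurable (fun y : ℝ => y ^ (-β) * log y ^ k / (1 + y)) :=
    (by fun_prop : Measurable _).aestronglyMeasurable
  refine hdom.mono' hmeas.restrict ((ae_restrict_iff' measurableSet_Ioi).2 (.of_forall ?_))
  intro y (hy : 0 < y)
  calc ‖y ^ (-β) * log y ^ k / (1 + y)‖ = y ^ (-β) * |log y| ^ k / (1 + y) := by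
        rw [norm_div, norm_mul, norm_pow, norm_of_nonneg (by positivity),
          norm_of_nonneg (by positivity : (0 : ℝ) ≤ 1 + y), norm_eq_abs]
    _ ≤ y ^ (-β) * (k ! / ε ^ k * (y ^ ε + y ^ (-ε))) / (1 + y) := by
        gcongr
        exact abs_log_pow_le hy hε k
    _ = k ! / ε ^ k * (y ^ (ε - β) / (1 + y) + y ^ (-ε - β) / (1 + y)) := by
        rw [sub_eq_add_neg, sub_eq_add_neg, rpow_add hy, rpow_add hy]
        ring

lemma I_zero_pos {β : ℝ} (hβ₀ : 0 < β) (hβ₁ : β < 1) : 0 < I 0 β := by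
  have hpos : ∀ y ∈ Ioi (0 : ℝ), 0 < y ^ (-β) * log y ^ 0 / (1 + y) := fun y (hy : 0 < y) => by
    positivity
  rw [I, setIntegral_pos_iff_support_of_nonneg_ae
    ((ae_restrict_iff' measurableSet_Ioi).2 (.of_forall fun y hy => (hpos y hy).le))
    (integrableOn_I_integrand 0 hβ₀ hβ₁),
    inter_eq_right.2 fun y hy => Function.mem_support.2 (hpos y hy).ne', volume_Ioi]
  exact ENNReal.zero_lt_top

section Chebyshev

variable {α : Type*} {w f g : α → ℝ}

def chebyshevKernel (w f g : α → ℝ) (z : α × α) : ℝ :=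
  w z.1 * w z.2 * ((f z.1 - f z.2) * (g z.1 - g z.2))

lemma chebyshevKernel_pos [LinearOrder α] {s : Set α} (hw : ∀ x ∈ s, 0 < w x)
    (hf : StrictMonoOn f s) (hg : StrictMonoOn g s) {x y : α} (hx : x ∈ s) (hy : y ∈ s)
    (hxy : x ≠ y) : 0 < chebyshevKernel w f g (x, y) := by
  refine mul_pos (mul_pos (hw x hx) (hw y hy)) ?_
  rcases hxy.lt_or_gt with h | h
  · exact mul_pos_of_neg_of_neg (sub_neg.2 (hf hx hy h)) (sub_neg.2 (hg hx hy h))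
  · exact mul_pos (sub_pos.2 (hf hy hx h)) (sub_pos.2 (hg hy hx h))

lemma chebyshevKernel_nonneg [LinearOrder α] {s : Set α} (hw : ∀ x ∈ s, 0 ≤ w x)
    (hf : MonotoneOn f s) (hg : MonotoneOn g s) {x y : α} (hx : x ∈ s) (hy : y ∈ s) :
    0 ≤ chebyshevKernel w f g (x, y) := by
  refine mul_nonneg (mul_nonneg (hw x hx) (hw y hy)) ?_
  rcases le_total x y with h | h
  · exact mul_nonneg_of_nonpos_of_nonpos (sub_nonpos.2 (hf hx hy h)) (sub_nonpos.2 (hg hx hy h))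
  · exact mul_nonneg (sub_nonneg.2 (hf hy hx h)) (sub_nonneg.2 (hg hy hx h))

lemma chebyshevKernel_eq_sum (w f g : α → ℝ) :
    chebyshevKernel w f g = fun z => w z.1 * f z.1 * g z.1 * w z.2 + w z.1 * (w z.2 * f z.2 * g z.2)
      - w z.1 * f z.1 * (w z.2 * g z.2) - w z.1 * g z.1 * (w z.2 * f z.2) := by
  funext z
  simp only [chebyshevKernel]
  ring

variable [MeasurableSpace α] {μ : Measure α}

lemma integrable_chebyshevKernel (hw : Integrable w μ) (hwf : Integrable (fun x => w x * f x) μ)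
    (hwg : Integrable (fun x => w x * g x) μ) (hwfg : Integrable (fun x => w x * f x * g x) μ) :
    Integrable (chebyshevKernel w f g) (μ.prod μ) := by
  rw [chebyshevKernel_eq_sum]
  exact (((hwfg.mul_prod hw).add (hw.mul_prod hwfg)).sub (hwf.mul_prod hwg)).sub (hwg.mul_prod hwf)

lemma integral_chebyshevKernel [SFinite μ] (hw : Integrable w μ)
    (hwf : Integrable (fun x => w x * f x) μ) (hwg : Integrable (fun x => w x * g x) μ)
    (hwfg : Integrable (fun x => w x * f x * g x) μ) :
    ∫ z, chebyshevKernel w f g z ∂μ.prod μ = 2 * ((∫ x, w x * f x * g x ∂μ) * (∫ x, w x ∂μ)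
      - (∫ x, w x * f x ∂μ) * ∫ x, w x * g x ∂μ) := by
  have h₁ := hwfg.mul_prod hw
  have h₂ := hw.mul_prod hwfg
  have h₃ := hwf.mul_prod hwg
  rw [chebyshevKernel_eq_sum, integral_sub, integral_sub, integral_add,
    integral_prod_mul (fun x => w x * f x * g x) w, integral_prod_mul w (fun x => w x * f x * g x),
    integral_prod_mul (fun x => w x * f x) (fun x => w x * g x),
    integral_prod_mul (fun x => w x * g x) (fun x => w x * f x)]
  · ring
  exacts [h₁, h₂, h₁.add h₂, h₃, (h₁.add h₂).sub h₃, hwg.mul_prod hwf]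

theorem integral_mul_integral_lt_of_chebyshevKernel [SFinite μ] (hw : Integrable w μ)
    (hwf : Integrable (fun x => w x * f x) μ) (hwg : Integrable (fun x => w x * g x) μ)
    (hwfg : Integrable (fun x => w x * f x * g x) μ)
    (hK : 0 ≤ᵐ[μ.prod μ] chebyshevKernel w f g)
    (hK_pos : 0 < μ.prod μ (Function.support (chebyshevKernel w f g))) :
    (∫ x, w x * f x ∂μ) * (∫ x, w x * g x ∂μ) < (∫ x, w x * f x * g x ∂μ) * ∫ x, w x ∂μ := by
  have := (integral_pos_iff_support_of_nonneg_ae hK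
    (integrable_chebyshevKernel hw hwf hwg hwfg)).2 hK_pos
  rw [integral_chebyshevKernel hw hwf hwg hwfg] at this
  linarith

lemma ae_chebyshevKernel_nonneg_restrict [LinearOrder α] [SFinite μ] {s : Set α}
    (hs : MeasurableSet s) (hw : ∀ x ∈ s, 0 ≤ w x) (hf : MonotoneOn f s)
    (hg : MonotoneOn g s) :
    0 ≤ᵐ[(μ.restrict s).prod (μ.restrict s)] chebyshevKernel w f g := by
  rw [Measure.prod_restrict, Filter.EventuallyLE, ae_restrict_iff' (hs.prod hs)]
  exact .of_forall fun z ⟨hx, hy⟩ => chebyshevKernel_nonneg hw hf hg hx hy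

end Chebyshev

lemma measure_support_chebyshevKernel_pos {w f g : ℝ → ℝ} (hw : ∀ y ∈ Ioi (0 : ℝ), 0 < w y)
    (hf : StrictMonoOn f (Ioi 0)) (hg : StrictMonoOn g (Ioi 0)) :
    0 < (volume.restrict (Ioi 0)).prod (volume.restrict (Ioi 0))
      (Function.support (chebyshevKernel w f g)) := by
  have hsub : Ioo (1 : ℝ) 2 ×ˢ Ioo 2 3 ⊆ Function.support (chebyshevKernel w f g) :=
    fun z ⟨hx, hy⟩ => (chebyshevKernel_pos hw hf hg
      (lt_trans one_pos hx.1) (lt_trans two_pos hy.1) (hx.2.trans hy.1).ne).ne'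
  refine lt_of_lt_of_le ?_ (measure_mono hsub)
  rw [Measure.prod_prod,
    Measure.restrict_eq_self _ (Ioo_subset_Ioi_self.trans (Ioi_subset_Ioi zero_le_one)),
    Measure.restrict_eq_self _ (Ioo_subset_Ioi_self.trans (Ioi_subset_Ioi zero_le_two))]
  norm_num

lemma I_one_mul_I_zero_lt {β β' : ℝ} (hβ₀ : 0 < β) (hββ' : β < β') (hβ'₁ : β' < 1) :
    I 1 β' * I 0 β < I 1 β * I 0 β' := by
  set w : ℝ → ℝ := fun y => y ^ (-β') / (1 + y)
  set f : ℝ → ℝ := fun y => y ^ (β' - β)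
  have hw : w = fun y => y ^ (-β') * log y ^ 0 / (1 + y) := by
    simp only [w, pow_zero, mul_one]
  have hwg : (fun y => w y * log y) = fun y => y ^ (-β') * log y ^ 1 / (1 + y) := by
    funext y
    simp only [w]
    ring
  have hrpow : ∀ y ∈ Ioi (0 : ℝ), y ^ (-β) = y ^ (-β') * f y := fun y (hy : 0 < y) => by
    rw [← rpow_add hy]
    ring_nf
  have hwf : EqOn (fun y => w y * f y) (fun y => y ^ (-β) * log y ^ 0 / (1 + y)) (Ioi 0) :=
    fun y hy => by
      simp only [hrpow y hy, w]
      ring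
  have hwfg : EqOn (fun y => w y * f y * log y)
      (fun y => y ^ (-β) * log y ^ 1 / (1 + y)) (Ioi 0) := fun y hy => by
    simp only [hrpow y hy, w]
    ring
  have hw_pos : ∀ y ∈ Ioi (0 : ℝ), 0 < w y := fun y (hy : 0 < y) => by positivity
  have hf_mono : StrictMonoOn f (Ioi 0) :=
    (strictMonoOn_rpow_Ici_of_exponent_pos (sub_pos.2 hββ')).mono Ioi_subset_Ici_self
  have hβ'₀ : 0 < β' := by linarith
  have hβ₁ : β < 1 := by linarith
  have key := integral_mul_integral_lt_of_chebyshevKernel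
    (by rw [hw]; exact integrableOn_I_integrand 0 hβ'₀ hβ'₁)
    ((integrableOn_I_integrand 0 hβ₀ hβ₁).congr_fun hwf.symm measurableSet_Ioi)
    (by rw [hwg]; exact integrableOn_I_integrand 1 hβ'₀ hβ'₁)
    ((integrableOn_I_integrand 1 hβ₀ hβ₁).congr_fun hwfg.symm measurableSet_Ioi)
    (ae_chebyshevKernel_nonneg_restrict measurableSet_Ioi (fun y hy => (hw_pos y hy).le)
      hf_mono.monotoneOn strictMonoOn_log.monotoneOn)
    (measure_support_chebyshevKernel_pos hw_pos hf_mono strictMonoOn_log)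
  rw [setIntegral_congr_fun measurableSet_Ioi hwf, setIntegral_congr_fun measurableSet_Ioi hwfg,
    hwg, hw] at key
  simp only [I]
  linarith

/-- The function `φ` is strictly decreasing on `(0,1)`. -/
theorem stmt1 : StrictAntiOn phi (Set.Ioo (0 : ℝ) 1) := by
  intro β hβ β' hβ' hlt
  rw [phi, phi, div_lt_div_iff₀ (I_zero_pos hβ'.1 hβ'.2) (I_zero_pos hβ.1 hβ.2)]
  exact I_one_mul_I_zero_lt hβ.1 hlt hβ'.2
end

section
/- The function φ is differentiable on (0,1), with derivative φ'(β) = (I_1(β)² − I_0(β) I_2(β)) / I_0(β)², and φ'(β) < 0 for every β ∈ (0,1); in particular I_1(β)² < I_0(β) I_2(β) for every β ∈ (0,1). -/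
open MeasureTheory

/-!
On a compact subinterval `[a, b]` of `(0, 1)` the `β`-derivative `-y^{-β} (log y)^{k+1} / (1+y)`
of the integrand is dominated by the sum of its absolute values at `a` and `b`, so
differentiation under the integral sign gives `I_k' = -I_{k+1}`, and the quotient rule gives
`φ'`. The sign is a strict Cauchy–Schwarz inequality for the positive weight
`w(y) = y^{-β} / (1+y)`: with `m = φ(β)` the weighted mean of `log`,
`I_0 I_2 - I_1^2 = I_0 ∫ w (log y - m)^2 > 0`, since `log` is not a.e. constant.
-/

open Set Real Filter

section Variance

variable {α : Type*} [MeasurableSpace α] {μ : Measure α} {w f : α → ℝ}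

theorem integral_pos_of_ae_pos [NeZero μ] (hw : ∀ᵐ x ∂μ, 0 < w x) (hint : Integrable w μ) :
    0 < ∫ x, w x ∂μ := by
  have hw₀ : 0 ≤ᵐ[μ] w := hw.mono fun _ hx => hx.le
  refine (integral_nonneg_of_ae hw₀).lt_of_ne' fun h => NeZero.ne μ ?_
  have hzero := (integral_eq_zero_iff_of_nonneg_ae hw₀ hint).1 h
  exact ae_eq_bot.1 <| eventually_false_iff_eq_bot.1 <|
    (hw.and hzero).mono fun _ hx => hx.1.ne' hx.2

theorem sq_integral_mul_lt_integral_mul_integral (hw : ∀ᵐ x ∂μ, 0 < w x)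
    (hw_int : Integrable w μ) (hwf : Integrable (fun x => w x * f x) μ)
    (hwf2 : Integrable (fun x => w x * f x ^ 2) μ) (hf : ∀ m : ℝ, ¬ f =ᵐ[μ] fun _ => m) :
    (∫ x, w x * f x ∂μ) ^ 2 < (∫ x, w x ∂μ) * ∫ x, w x * f x ^ 2 ∂μ := by
  have : NeZero μ := ⟨fun h => hf 0 (by simp [h, EventuallyEq])⟩
  set W := ∫ x, w x ∂μ
  set A := ∫ x, w x * f x ∂μ
  set m := A / W
  have hW : 0 < W := integral_pos_of_ae_pos hw hw_int
  have hexpand : (fun x => w x * (f x - m) ^ 2) =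
      fun x => w x * f x ^ 2 - 2 * m * (w x * f x) + m ^ 2 * w x := by
    funext x; ring
  have hint : Integrable (fun x => w x * (f x - m) ^ 2) μ := by
    rw [hexpand]; exact (hwf2.sub (hwf.const_mul _)).add (hw_int.const_mul _)
  have hnonneg : 0 ≤ᵐ[μ] fun x => w x * (f x - m) ^ 2 := hw.mono fun x hx => by
    positivity
  have hvar : 0 < ∫ x, w x * (f x - m) ^ 2 ∂μ := by
    refine (integral_nonneg_of_ae hnonneg).lt_of_ne' fun h => hf m ?_
    filter_upwards [hw, (integral_eq_zero_iff_of_nonneg_ae hnonneg hint).1 h] with x hx hx0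
    simpa [hx.ne', sub_eq_zero] using hx0
  rw [hexpand, integral_add (f := fun x => w x * f x ^ 2 - 2 * m * (w x * f x))
    (hwf2.sub (hwf.const_mul _)) (hw_int.const_mul _),
    integral_sub hwf2 (hwf.const_mul _), integral_const_mul, integral_const_mul] at hvar
  have hmW : m * W = A := div_mul_cancel₀ A hW.ne'
  nlinarith [mul_pos hvar hW]

end Variance

theorem rpow_le_rpow_add_rpow {y a b x : ℝ} (hy : 0 < y) (hax : a ≤ x) (hxb : x ≤ b) :
    y ^ x ≤ y ^ a + y ^ b := by
  rcases le_total 1 y with hy1 | hy1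
  · linarith [rpow_le_rpow_of_exponent_le hy1 hxb, rpow_nonneg hy.le a]
  · linarith [rpow_le_rpow_of_exponent_ge hy hy1 hax, rpow_nonneg hy.le b]

theorem abs_log_le_rpow_neg_div {y ε : ℝ} (hy0 : 0 < y) (hy1 : y ≤ 1) (hε : 0 < ε) :
    |log y| ≤ y ^ (-ε) / ε := by
  rw [abs_of_nonpos (log_nonpos hy0.le hy1), ← log_inv, rpow_neg hy0.le, ← inv_rpow hy0.le]
  exact log_le_rpow_div (inv_nonneg.2 hy0.le) hε

theorem log_not_ae_eq_const (m : ℝ) : ¬ log =ᵐ[volume.restrict (Ioi 0)] fun _ => m := by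
  intro h
  have hfalse : ∀ᵐ y ∂volume.restrict (Ioi (0 : ℝ)), False := by
    filter_upwards [h, ae_restrict_mem measurableSet_Ioi,
      ae_restrict_of_ae (Measure.ae_ne volume (exp m))] with y hlog hy hne
    exact hne (by rw [← hlog, exp_log hy])
  simpa using Measure.restrict_eq_zero.1 (ae_eq_bot.1 (eventually_false_iff_eq_bot.1 hfalse))

noncomputable def IIntegrand (k : ℕ) (β y : ℝ) : ℝ := y ^ (-β) * log y ^ k / (1 + y)

theorem I_eq_integral_IIntegrand (k : ℕ) (β : ℝ) :
    I k β = ∫ y in Ioi 0, IIntegrand k β y := rfl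

section IIntegrand

variable {k : ℕ} {β y : ℝ}

theorem continuousOn_IIntegrand (k : ℕ) (β : ℝ) : ContinuousOn (IIntegrand k β) (Ioi 0) := by
  unfold IIntegrand
  fun_prop (disch := intro y hy; simp only [mem_Ioi] at hy; first | positivity | exact hy.ne')

theorem IIntegrand_mul_log : IIntegrand k β y * log y = IIntegrand (k + 1) β y := by
  unfold IIntegrand; ring

theorem IIntegrand_mul_log_pow (n : ℕ) :
    IIntegrand k β y * log y ^ n = IIntegrand (k + n) β y := by
  unfold IIntegrand; ring

theorem IIntegrand_zero_pos (hy : 0 < y) : 0 < IIntegrand 0 β y := by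
  unfold IIntegrand; positivity

theorem norm_IIntegrand (hy : 0 < y) :
    ‖IIntegrand k β y‖ = y ^ (-β) * |log y| ^ k / (1 + y) := by
  rw [IIntegrand, norm_div, norm_mul, norm_pow, norm_of_nonneg (rpow_nonneg hy.le _),
    norm_of_nonneg (by positivity : 0 ≤ 1 + y), norm_eq_abs]

theorem norm_IIntegrand_le_add {a b : ℝ} (hy : 0 < y) (ha : a ≤ β) (hb : β ≤ b) :
    ‖IIntegrand k β y‖ ≤ ‖IIntegrand k a y‖ + ‖IIntegrand k b y‖ := by
  rw [norm_IIntegrand hy, norm_IIntegrand hy, norm_IIntegrand hy, ← add_div, ← add_mul]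
  gcongr
  exact (rpow_le_rpow_add_rpow hy (neg_le_neg hb) (neg_le_neg ha)).trans_eq (add_comm _ _)

theorem hasDerivAt_IIntegrand (k : ℕ) (hy : 0 < y) (β : ℝ) :
    HasDerivAt (fun b => IIntegrand k b y) (-IIntegrand (k + 1) β y) β := by
  unfold IIntegrand
  refine ((((hasDerivAt_id' β).neg.const_rpow hy).mul_const (log y ^ k)).div_const
    (1 + y)).congr_deriv ?_
  simp only [Pi.neg_apply]
  ring

theorem norm_IIntegrand_le_of_le_one (hy0 : 0 < y) (hy1 : y ≤ 1) {ε : ℝ} (hε : 0 < ε) :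
    ‖IIntegrand k β y‖ ≤ (ε ^ k)⁻¹ * y ^ (-β - ε * k) := by
  rw [norm_IIntegrand hy0]
  calc y ^ (-β) * |log y| ^ k / (1 + y) ≤ y ^ (-β) * (y ^ (-ε) / ε) ^ k / 1 := by
        gcongr
        · exact abs_log_le_rpow_neg_div hy0 hy1 hε
        · linarith
    _ = _ := by
        rw [div_one, div_pow, ← rpow_natCast, ← rpow_mul hy0.le, sub_eq_add_neg, rpow_add hy0,
          neg_mul]
        ring

theorem norm_IIntegrand_le_of_one_le (hy1 : 1 ≤ y) {ε : ℝ} (hε : 0 < ε) :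
    ‖IIntegrand k β y‖ ≤ (ε ^ k)⁻¹ * y ^ (-β + ε * k - 1) := by
  have hy0 : 0 < y := by linarith
  rw [norm_IIntegrand hy0]
  calc y ^ (-β) * |log y| ^ k / (1 + y) ≤ y ^ (-β) * (y ^ ε / ε) ^ k / y := by
        gcongr
        · rw [abs_of_nonneg (log_nonneg hy1)]
          exact log_le_rpow_div hy0.le hε
        · linarith
    _ = _ := by
        rw [div_pow, ← rpow_natCast, ← rpow_mul hy0.le, rpow_sub hy0, rpow_add hy0, rpow_one]
        ring

theorem integrableOn_IIntegrand (k : ℕ) (hβ : β ∈ Ioo 0 1) :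
    IntegrableOn (IIntegrand k β) (Ioi 0) := by
  obtain ⟨hβ0, hβ1⟩ := hβ
  -- `ε k < min β (1 - β)` makes both majorants below integrable
  set ε := min β (1 - β) / (k + 1)
  have hε : 0 < ε := div_pos (lt_min hβ0 (by linarith)) (by positivity)
  have hεk : ε * k < min β (1 - β) := by
    have : ε * (k + 1) = min β (1 - β) := div_mul_cancel₀ _ (by positivity)
    nlinarith
  have hεk₀ := hεk.trans_le (min_le_left _ _)
  have hεk₁ := hεk.trans_le (min_le_right _ _)
  rw [← Ioc_union_Ioi_eq_Ioi zero_le_one]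
  refine IntegrableOn.union ?_ ?_
  · have hdom : IntegrableOn (fun y => (ε ^ k)⁻¹ * y ^ (-β - ε * k)) (Ioc 0 1) :=
      ((intervalIntegrable_iff_integrableOn_Ioc_of_le zero_le_one).1
        (intervalIntegral.intervalIntegrable_rpow' (by linarith))).const_mul _
    exact hdom.mono'
      (((continuousOn_IIntegrand k β).mono Ioc_subset_Ioi_self).aestronglyMeasurable
        measurableSet_Ioc)
      (ae_restrict_of_forall_mem measurableSet_Ioc fun y hy =>
        norm_IIntegrand_le_of_le_one hy.1 hy.2 hε)
  · have hdom : IntegrableOn (fun y => (ε ^ k)⁻¹ * y ^ (-β + ε * k - 1)) (Ioi 1) :=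
      (integrableOn_Ioi_rpow_of_lt (by linarith) one_pos).const_mul _
    exact hdom.mono'
      (((continuousOn_IIntegrand k β).mono (Ioi_subset_Ioi zero_le_one)).aestronglyMeasurable
        measurableSet_Ioi)
      (ae_restrict_of_forall_mem measurableSet_Ioi fun y hy =>
        norm_IIntegrand_le_of_one_le hy.le hε)

end IIntegrand

theorem hasDerivAt_I (k : ℕ) {β : ℝ} (hβ : β ∈ Ioo 0 1) :
    HasDerivAt (I k) (-I (k + 1) β) β := by
  obtain ⟨δ, hδ, hball⟩ := Metric.isOpen_iff.1 isOpen_Ioo β hβ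
  have hmem : ∀ x, β - δ / 2 ≤ x → x ≤ β + δ / 2 → x ∈ Ioo (0 : ℝ) 1 :=
    fun x h₁ h₂ => hball (by rw [Metric.mem_ball, dist_eq, abs_lt]; constructor <;> linarith)
  have hparam := hasDerivAt_integral_of_dominated_loc_of_deriv_le
    (μ := volume.restrict (Ioi 0)) (F := IIntegrand k) (F' := fun b y => -IIntegrand (k + 1) b y)
    (bound := fun y =>
      ‖IIntegrand (k + 1) (β - δ / 2) y‖ + ‖IIntegrand (k + 1) (β + δ / 2) y‖)
    (Metric.ball_mem_nhds β (half_pos hδ))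
    (Eventually.of_forall fun b =>
      (continuousOn_IIntegrand k b).aestronglyMeasurable measurableSet_Ioi)
    (integrableOn_IIntegrand k hβ)
    ((continuousOn_IIntegrand (k + 1) β).neg.aestronglyMeasurable measurableSet_Ioi)
    (ae_restrict_of_forall_mem measurableSet_Ioi fun y hy b hb => by
      rw [Metric.mem_ball, dist_eq, abs_lt] at hb
      rw [norm_neg]
      exact norm_IIntegrand_le_add hy (by linarith) (by linarith))
    ((integrableOn_IIntegrand (k + 1) (hmem _ le_rfl (by linarith))).norm.add
      (integrableOn_IIntegrand (k + 1) (hmem _ (by linarith) le_rfl)).norm)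
    (ae_restrict_of_forall_mem measurableSet_Ioi fun y hy b _ => hasDerivAt_IIntegrand k hy b)
  have hderiv := hparam.2
  rw [integral_neg] at hderiv
  exact hderiv

theorem I_zero_pos_s2 {β : ℝ} (hβ : β ∈ Ioo 0 1) : 0 < I 0 β := by
  have : NeZero (volume (Ioi (0 : ℝ))) := ⟨by simp⟩
  exact integral_pos_of_ae_pos
    (ae_restrict_of_forall_mem measurableSet_Ioi fun _ hy => IIntegrand_zero_pos hy)
    (integrableOn_IIntegrand 0 hβ)

theorem sq_I_one_lt_I_zero_mul_I_two {β : ℝ} (hβ : β ∈ Ioo 0 1) :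
    I 1 β ^ 2 < I 0 β * I 2 β := by
  have := sq_integral_mul_lt_integral_mul_integral (f := log)
    (ae_restrict_of_forall_mem measurableSet_Ioi fun _ hy => IIntegrand_zero_pos (β := β) hy)
    (integrableOn_IIntegrand 0 hβ)
    (by simp only [IIntegrand_mul_log, zero_add]; exact integrableOn_IIntegrand 1 hβ)
    (by simp only [IIntegrand_mul_log_pow, zero_add]; exact integrableOn_IIntegrand 2 hβ)
    log_not_ae_eq_const
  simpa only [I_eq_integral_IIntegrand, IIntegrand_mul_log, IIntegrand_mul_log_pow, zero_add]
    using this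

/-- `φ` is differentiable on `(0,1)` with
`φ'(β) = (I₁(β)² − I₀(β) I₂(β)) / I₀(β)² < 0`; in particular
`I₁(β)² < I₀(β) I₂(β)`. -/
theorem stmt2 :
    ∀ β ∈ Set.Ioo (0 : ℝ) 1,
      HasDerivAt phi ((I 1 β ^ 2 - I 0 β * I 2 β) / (I 0 β) ^ 2) β ∧
      (I 1 β ^ 2 - I 0 β * I 2 β) / (I 0 β) ^ 2 < 0 ∧
      I 1 β ^ 2 < I 0 β * I 2 β := by
  intro β hβ
  have hI0 := I_zero_pos_s2 hβ
  have hCS := sq_I_one_lt_I_zero_mul_I_two hβ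
  have hder : HasDerivAt phi _ β := (hasDerivAt_I 1 hβ).div (hasDerivAt_I 0 hβ) hI0.ne'
  exact ⟨hder.congr_deriv (by ring), div_neg_of_neg_of_pos (by linarith) (by positivity), hCS⟩
end

section
/- Let (C_j)_{j∈ℕ} be i.i.d. random variables with values in (0,∞) such that log C_1 is integrable. If E[log C_1] < 0, then the random series ∑_{n=1}^∞ ∏_{j=1}^n C_j converges (is finite) almost surely. If E[log C_1] ≥ 0, then ∑_{n=1}^∞ ∏_{j=1}^n C_j = ∞ almost surely. -/
/-!
If `E[log C₀] < 0`, the strong law of large numbers gives `∏_{j ≤ n} C_j ≤ e^{n E[log C₀] / 2}`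
for large `n`, so the series is dominated by a geometric one.

If `E[log C₀] ≥ 0`, let `S` be the series and `S'` the same series for the shifted sequence
`(C_{j+1})`, so that `S = C₀ (1 + S')`. Divergence of `S` is a tail event, so by Kolmogorov's
0-1 law it suffices to rule out `S < ∞` a.s. In that case `S` and `S'` are identically distributed
and `log S - log S' = log C₀ + log (1 + 1 / S') > log C₀`. But an increment `U - V` of identically
distributed `U`, `V` that is bounded below by an integrable variable has mean `≤ 0` (truncate `U`
and `V` at level `K`, where the means agree, and let `K → ∞` with Fatou's lemma), which forces
`E[log C₀] < 0`.
-/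

open MeasureTheory Filter ProbabilityTheory Finset
open scoped ENNReal Topology

noncomputable def perpetuity (x : ℕ → ℝ) : ℝ≥0∞ :=
  ∑' n : ℕ, ENNReal.ofReal (∏ j ∈ range (n + 1), x j)

namespace perpetuity

theorem measurable : Measurable perpetuity :=
  .tsum fun _ => (Finset.measurable_prod _ fun j _ => measurable_pi_apply j).ennreal_ofReal

theorem ofReal_le (x : ℕ → ℝ) : ENNReal.ofReal (x 0) ≤ perpetuity x := by
  rw [perpetuity]
  simpa using ENNReal.le_tsum (f := fun n => ENNReal.ofReal (∏ j ∈ range (n + 1), x j)) 0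

theorem eq_mul_one_add_shift (x : ℕ → ℝ) (hx : 0 ≤ x 0) :
    perpetuity x = ENNReal.ofReal (x 0) * (1 + perpetuity (fun j => x (j + 1))) := by
  have hprod (n : ℕ) : ENNReal.ofReal (∏ j ∈ range (n + 1 + 1), x j)
      = ENNReal.ofReal (x 0) * ENNReal.ofReal (∏ j ∈ range (n + 1), x (j + 1)) := by
    rw [prod_range_succ', mul_comm, ENNReal.ofReal_mul hx]
  rw [perpetuity, perpetuity, tsum_eq_zero_add' ENNReal.summable]
  simp only [hprod, ENNReal.tsum_mul_left, zero_add, range_one, prod_singleton]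
  ring

theorem eq_top_iff_shift {x : ℕ → ℝ} (hx : 0 < x 0) :
    perpetuity x = ⊤ ↔ perpetuity (fun j => x (j + 1)) = ⊤ := by
  rw [eq_mul_one_add_shift x hx.le, ENNReal.mul_eq_top]
  simp [hx]

theorem eq_top_iff_shift_add {x : ℕ → ℝ} (hx : ∀ j, 0 < x j) (n : ℕ) :
    perpetuity x = ⊤ ↔ perpetuity (fun j => x (j + n)) = ⊤ := by
  induction n with
  | zero => rfl
  | succ n ih =>
    rw [ih, eq_top_iff_shift (x := fun j => x (j + n)) (by simpa using hx n)]
    simp_rw [add_assoc, add_comm 1 n]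

theorem log_lt_log_sub_log_shift {x : ℕ → ℝ} (hx : ∀ j, 0 < x j) (hfin : perpetuity x ≠ ⊤) :
    Real.log (x 0) <
      Real.log (perpetuity x).toReal - Real.log (perpetuity (fun j => x (j + 1))).toReal := by
  set t := (perpetuity (fun j => x (j + 1))).toReal
  have ht_fin : perpetuity (fun j => x (j + 1)) ≠ ⊤ := by rwa [ne_eq, ← eq_top_iff_shift (hx 0)]
  have ht_pos : 0 < t := by
    refine (hx 1).trans_le ?_
    simpa [ENNReal.toReal_ofReal (hx 1).le] using ENNReal.toReal_mono ht_fin (ofReal_le _)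
  have ht : (perpetuity x).toReal = x 0 * (1 + t) := by
    rw [eq_mul_one_add_shift x (hx 0).le, ENNReal.toReal_mul, ENNReal.toReal_ofReal (hx 0).le,
      ENNReal.toReal_add ENNReal.one_ne_top ht_fin, ENNReal.toReal_one]
  rw [ht, Real.log_mul (hx 0).ne' (by positivity)]
  have : Real.log t < Real.log (1 + t) := Real.log_lt_log ht_pos (by linarith)
  linarith

end perpetuity

theorem summable_prod_range_succ_of_tendsto_avg_log {x : ℕ → ℝ} (hx : ∀ j, 0 < x j) {m : ℝ}
    (hm : m < 0) (h : Tendsto (fun n : ℕ => (∑ i ∈ range n, Real.log (x i)) / n) atTop (𝓝 m)) :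
    Summable (fun n => ∏ j ∈ range (n + 1), x j) := by
  set r := Real.exp (m / 2)
  have hr : r < 1 := Real.exp_lt_one_iff.2 (by linarith)
  refine Summable.of_norm_bounded_eventually_nat
    ((summable_geometric_of_lt_one (Real.exp_pos _).le hr).mul_left r) ?_
  have hlt : m < m / 2 := by linarith
  filter_upwards [(tendsto_add_atTop_nat 1).eventually (h.eventually_lt_const hlt)] with n hn
  have hn_pos : (0 : ℝ) < (n + 1 : ℕ) := by positivity
  rw [div_lt_iff₀ hn_pos] at hn
  calc ‖∏ j ∈ range (n + 1), x j‖ = Real.exp (∑ i ∈ range (n + 1), Real.log (x i)) := by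
        rw [Real.exp_sum, Real.norm_of_nonneg (prod_nonneg fun j _ => (hx j).le)]
        exact prod_congr rfl fun j _ => (Real.exp_log (hx j)).symm
    _ ≤ Real.exp (m / 2 * (n + 1 : ℕ)) := Real.exp_le_exp.2 hn.le
    _ = r * r ^ n := by rw [← pow_succ', ← Real.exp_nat_mul, mul_comm]

noncomputable def clip (K : ℕ) (x : ℝ) : ℝ := max (-K) (min K x)

theorem measurable_clip (K : ℕ) : Measurable (clip K) := by
  unfold clip; fun_prop

theorem abs_clip_le (K : ℕ) (x : ℝ) : |clip K x| ≤ K :=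
  abs_le.2 ⟨le_max_left _ _, max_le (by simp) (min_le_left _ _)⟩

theorem eventually_clip_eq (x : ℝ) : ∀ᶠ K : ℕ in atTop, clip K x = x := by
  filter_upwards [eventually_ge_atTop ⌈|x|⌉₊] with K hK
  have hx : |x| ≤ K := (Nat.le_ceil _).trans (by exact_mod_cast hK)
  rw [clip, min_eq_right ((le_abs_self x).trans hx), max_eq_right (by linarith [neg_abs_le x])]

theorem ofReal_clip_sub_clip_le (K : ℕ) (a b : ℝ) :
    ENNReal.ofReal (clip K a - clip K b) ≤ ENNReal.ofReal (a - b) := by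
  rw [ENNReal.ofReal_le_ofReal_iff']
  unfold clip
  rcases le_total a b with hab | hab
  · right; simp only [sub_nonpos]; gcongr
  · left; simp only [min_def, max_def]; split_ifs <;> linarith

section Increments

variable {Ω : Type*} [MeasurableSpace Ω] {μ : Measure Ω}

theorem lintegral_ofReal_sub_eq_of_integral_eq {f g : Ω → ℝ} (hf : Integrable f μ)
    (hg : Integrable g μ) (hfg : ∫ ω, f ω ∂μ = ∫ ω, g ω ∂μ) :
    ∫⁻ ω, ENNReal.ofReal (f ω - g ω) ∂μ = ∫⁻ ω, ENNReal.ofReal (g ω - f ω) ∂μ := by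
  have h := integral_eq_lintegral_pos_part_sub_lintegral_neg_part (hf.sub hg)
  simp only [Pi.sub_apply, neg_sub, integral_sub hf hg, hfg, sub_self] at h
  exact (ENNReal.toReal_eq_toReal_iff' (hf.sub hg).lintegral_lt_top.ne
    (hg.sub hf).lintegral_lt_top.ne).1 (sub_eq_zero.1 h.symm)

namespace ProbabilityTheory.IdentDistrib

variable [IsFiniteMeasure μ] {U V : Ω → ℝ}

theorem lintegral_ofReal_sub_le (h : IdentDistrib U V μ μ) :
    ∫⁻ ω, ENNReal.ofReal (U ω - V ω) ∂μ ≤ ∫⁻ ω, ENNReal.ofReal (V ω - U ω) ∂μ := by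
  have hclip_meas (K : ℕ) {W : Ω → ℝ} (hW : AEMeasurable W μ) :
      AEMeasurable (fun ω => clip K (W ω)) μ :=
    (measurable_clip K).comp_aemeasurable hW
  have hclip_int (K : ℕ) {W : Ω → ℝ} (hW : AEMeasurable W μ) :
      Integrable (fun ω => clip K (W ω)) μ :=
    .of_bound (hclip_meas K hW).aestronglyMeasurable K (ae_of_all _ fun ω => abs_clip_le K (W ω))
  calc ∫⁻ ω, ENNReal.ofReal (U ω - V ω) ∂μ
      = ∫⁻ ω, liminf (fun K => ENNReal.ofReal (clip K (U ω) - clip K (V ω))) atTop ∂μ := by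
        refine lintegral_congr fun ω => (Tendsto.liminf_eq (tendsto_const_nhds.congr' ?_)).symm
        filter_upwards [eventually_clip_eq (U ω), eventually_clip_eq (V ω)] with K hU hV
        rw [hU, hV]
    _ ≤ liminf (fun K => ∫⁻ ω, ENNReal.ofReal (clip K (U ω) - clip K (V ω)) ∂μ) atTop :=
        lintegral_liminf_le' fun K =>
          ((hclip_meas K h.aemeasurable_fst).sub (hclip_meas K h.aemeasurable_snd)).ennreal_ofReal
    _ = liminf (fun K => ∫⁻ ω, ENNReal.ofReal (clip K (V ω) - clip K (U ω)) ∂μ) atTop := by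
        congr 1; funext K
        exact lintegral_ofReal_sub_eq_of_integral_eq (hclip_int K h.aemeasurable_fst)
          (hclip_int K h.aemeasurable_snd) (h.comp (measurable_clip K)).integral_eq
    _ ≤ ∫⁻ ω, ENNReal.ofReal (V ω - U ω) ∂μ :=
        liminf_le_of_frequently_le' (Frequently.of_forall fun K =>
          lintegral_mono fun ω => ofReal_clip_sub_clip_le K _ _)

theorem integral_lt_zero_of_lt_sub [NeZero μ] (h : IdentDistrib U V μ μ) {Z : Ω → ℝ}
    (hZ : Integrable Z μ) (hlt : ∀ᵐ ω ∂μ, Z ω < U ω - V ω) : ∫ ω, Z ω ∂μ < 0 := by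
  have hD_meas : AEStronglyMeasurable (fun ω => U ω - V ω) μ :=
    (h.aemeasurable_fst.sub h.aemeasurable_snd).aestronglyMeasurable
  have hneg_le : ∫⁻ ω, ENNReal.ofReal (V ω - U ω) ∂μ ≤ ∫⁻ ω, ENNReal.ofReal (-Z ω) ∂μ :=
    lintegral_mono_ae (hlt.mono fun ω hω => ENNReal.ofReal_le_ofReal (by linarith))
  have hneg_fin : ∫⁻ ω, ENNReal.ofReal (-Z ω) ∂μ ≠ ∞ := hZ.neg.lintegral_lt_top.ne
  have hgap_nonneg : 0 ≤ᵐ[μ] fun ω => U ω - V ω - Z ω := hlt.mono fun ω hω => by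
    simp only [Pi.zero_apply]; linarith
  have hgap : Integrable (fun ω => U ω - V ω - Z ω) μ := by
    refine (lintegral_ofReal_ne_top_iff_integrable (hD_meas.sub hZ.1) hgap_nonneg).1 ?_
    refine (lt_of_le_of_lt ?_ (ENNReal.add_lt_top.2
      ⟨(h.lintegral_ofReal_sub_le.trans hneg_le).trans_lt hneg_fin.lt_top, hneg_fin.lt_top⟩)).ne
    calc ∫⁻ ω, ENNReal.ofReal (U ω - V ω - Z ω) ∂μ
        ≤ ∫⁻ ω, ENNReal.ofReal (U ω - V ω) + ENNReal.ofReal (-Z ω) ∂μ :=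
          lintegral_mono fun ω => by rw [sub_eq_add_neg]; exact ENNReal.ofReal_add_le
      _ = _ := lintegral_add_left' hD_meas.aemeasurable.ennreal_ofReal _
  have hD : Integrable (fun ω => U ω - V ω) μ := (hgap.add hZ).congr (ae_of_all _ fun ω => by simp)
  have hD_nonpos : ∫ ω, U ω - V ω ∂μ ≤ 0 := by
    rw [integral_eq_lintegral_pos_part_sub_lintegral_neg_part hD, sub_nonpos]
    simp only [neg_sub]
    exact ENNReal.toReal_mono (ne_top_of_le_ne_top hneg_fin hneg_le) h.lintegral_ofReal_sub_le
  have hgap_pos : 0 < ∫ ω, U ω - V ω - Z ω ∂μ := by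
    refine (integral_pos_iff_support_of_nonneg_ae hgap_nonneg hgap).2
      (pos_iff_ne_zero.2 fun h0 => ?_)
    obtain ⟨ω, hω0, hω⟩ := ((measure_eq_zero_iff_ae_notMem.1 h0).and hlt).exists
    exact hω0 (sub_pos.2 hω).ne'
  rw [integral_sub hD hZ] at hgap_pos
  linarith

end ProbabilityTheory.IdentDistrib

end Increments

theorem ProbabilityTheory.iIndepFun.identDistrib_precomp {Ω β : Type*} [MeasurableSpace Ω]
    [MeasurableSpace β] {P : Measure Ω} {C : ℕ → Ω → β} (hindep : iIndepFun C P)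
    (hmeas : ∀ j, Measurable (C j)) (hident : ∀ j, IdentDistrib (C j) (C 0) P P) {g : ℕ → ℕ}
    (hg : g.Injective) : IdentDistrib (fun ω j => C j ω) (fun ω j => C (g j) ω) P P := by
  have hlaw {D : ℕ → Ω → β} (hD : iIndepFun D P) (hDmeas : ∀ j, Measurable (D j))
      (hDident : ∀ j, IdentDistrib (D j) (C 0) P P) :
      P.map (fun ω j => D j ω) = Measure.infinitePi (fun _ => P.map (C 0)) := by
    rw [hD.map_fun_eq_infinitePi_map hDmeas]
    exact congrArg _ (funext fun j => (hDident j).map_eq)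
  exact ⟨(measurable_pi_lambda _ hmeas).aemeasurable,
    (measurable_pi_lambda _ fun j => hmeas (g j)).aemeasurable,
    (hlaw hindep hmeas hident).trans
      (hlaw (hindep.precomp hg) (fun j => hmeas (g j)) fun j => hident (g j)).symm⟩

theorem ae_perpetuity_eq_top_or_ne_top {Ω : Type*} [MeasurableSpace Ω] {P : Measure Ω}
    [IsProbabilityMeasure P] {C : ℕ → Ω → ℝ} (hmeas : ∀ j, Measurable (C j))
    (hpos : ∀ j ω, 0 < C j ω) (hindep : iIndepFun C P) :
    (∀ᵐ ω ∂P, perpetuity (fun j => C j ω) = ⊤) ∨ (∀ᵐ ω ∂P, perpetuity (fun j => C j ω) ≠ ⊤) := by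
  set s : ℕ → MeasurableSpace Ω := fun j => MeasurableSpace.comap (C j) inferInstance
  have htail : MeasurableSet[limsup s atTop] {ω | perpetuity (fun j => C j ω) = ⊤} := by
    rw [limsup_eq_iInf_iSup_of_nat, MeasurableSpace.measurableSet_iInf]
    intro n
    have hshift : {ω | perpetuity (fun j => C j ω) = ⊤}
        = (fun ω => perpetuity fun j => C (j + n) ω) ⁻¹' {⊤} := by
      ext ω; exact perpetuity.eq_top_iff_shift_add (hpos · ω) n
    rw [hshift]
    have hseq : Measurable[⨆ i ≥ n, s i] (fun ω j => C (j + n) ω) :=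
      @measurable_pi_lambda Ω ℕ (fun _ => ℝ) (⨆ i ≥ n, s i) _ _ fun j =>
        measurable_iff_comap_le.2 <| le_iSup₂ (f := fun i (_ : i ≥ n) => s i) (j + n) (by omega)
    exact (perpetuity.measurable.comp hseq) (measurableSet_singleton ⊤)
  have hmeasSet : MeasurableSet {ω | perpetuity (fun j => C j ω) = ⊤} :=
    (perpetuity.measurable.comp (measurable_pi_lambda _ hmeas)) (measurableSet_singleton ⊤)
  rcases measure_zero_or_one_of_measurableSet_limsup_atTop (fun j => (hmeas j).comap_le)
    ((iIndepFun_iff_iIndep _ _ _).1 hindep) htail with h | h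
  · exact .inr (measure_eq_zero_iff_ae_notMem.1 h)
  · exact .inl ((ae_iff_measure_eq hmeasSet.nullMeasurableSet).2 (by rw [h, measure_univ]))

/-- Kaluza-type dichotomy for random geometric-like series: if `(C_j)` are i.i.d.
strictly positive random variables with integrable logarithm, then
`∑_{n≥1} ∏_{j=1}^n C_j` is a.s. finite when `E[log C₁] < 0` and a.s. infinite
when `E[log C₁] ≥ 0`. -/
theorem stmt4 {Ω : Type*} [MeasurableSpace Ω] (P : Measure Ω) [IsProbabilityMeasure P]
    (C : ℕ → Ω → ℝ) (hmeas : ∀ j, Measurable (C j)) (hpos : ∀ j ω, 0 < C j ω)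
    (hindep : iIndepFun C P)
    (hident : ∀ j, IdentDistrib (C j) (C 0) P P)
    (hint : Integrable (fun ω => Real.log (C 0 ω)) P) :
    ((∫ ω, Real.log (C 0 ω) ∂P) < 0 →
      ∀ᵐ ω ∂P, Summable (fun n => ∏ j ∈ Finset.range (n + 1), C j ω)) ∧
    (0 ≤ (∫ ω, Real.log (C 0 ω) ∂P) →
      ∀ᵐ ω ∂P, ∑' n : ℕ, ENNReal.ofReal (∏ j ∈ Finset.range (n + 1), C j ω) = ⊤) := by
  refine ⟨fun hneg => ?_, fun hnonneg => ?_⟩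
  · have hslln := strong_law_ae_real (fun j ω => Real.log (C j ω)) hint
      (fun i j hij => (hindep.comp (fun _ => Real.log) fun _ => Real.measurable_log).indepFun hij)
      fun j => (hident j).comp Real.measurable_log
    filter_upwards [hslln] with ω hω
    exact summable_prod_range_succ_of_tendsto_avg_log (hpos · ω) hneg hω
  · refine (ae_perpetuity_eq_top_or_ne_top hmeas hpos hindep).resolve_right fun hfin => ?_
    have hshift := ((hindep.identDistrib_precomp hmeas hident (add_left_injective 1)).comp
      perpetuity.measurable).comp (Real.measurable_log.comp ENNReal.measurable_toReal)
    have := hshift.integral_lt_zero_of_lt_sub hint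
      (hfin.mono fun ω hω => perpetuity.log_lt_log_sub_log_shift (hpos · ω) hω)
    linarith
end

section
/- Let β₁, β₂ ∈ (0,1) with β₁₂ := β₁ + β₂ − 1 ∈ (0,1). Then for every x > 0, P_D^{β₁,β₂}(x | 1) = ∫_0^x p_B^{β₁}(y | 1) · P_D^{β₂,β₁}(x − y | y) dy. -/
open MeasureTheory Real

/-- Overshoot density `p_B^β(y ∣ x) = (Γ(β)Γ(1−β))⁻¹ (x/y)^β (x+y)⁻¹`. -/
noncomputable def pB (β x y : ℝ) : ℝ :=
  (Gamma β * Gamma (1 - β))⁻¹ * (x / y) ^ β * (x + y)⁻¹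

/-- `P_D^{β₁,β₂}(x ∣ a) = (Γ(β₁₂)Γ(1−β₁₂))⁻¹ ∫_0^1 (a/x+y)^{β₁−1} y^{β₂−1} (1−y)^{−β₁₂} dy`,
where `β₁₂ = β₁ + β₂ − 1`. -/
noncomputable def PD (β₁ β₂ x a : ℝ) : ℝ :=
  (Gamma (β₁ + β₂ - 1) * Gamma (1 - (β₁ + β₂ - 1)))⁻¹ *
    ∫ y in (0 : ℝ)..1, (a / x + y) ^ (β₁ - 1) * y ^ (β₂ - 1) * (1 - y) ^ (-(β₁ + β₂ - 1))

open Set Function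

/-! Substituting `t = x u` turns `P_D^{β₁,β₂}(x ∣ 1)` into a constant times
`∫_0^x (1+t)^{β₁-1} t^{β₂-1} (x-t)^{-β₁₂} dt`, and `t = y + (x-y) u` turns `P_D^{β₂,β₁}(x-y ∣ y)`
into the same constant times `∫_y^x t^{β₂-1} (t-y)^{β₁-1} (x-t)^{-β₁₂} dt`. Exchanging the order of
integration over the triangle `0 < y < t < x` (everything is nonnegative) leaves the inner integral
`∫_0^t y^{-β₁} (t-y)^{β₁-1} (1+y)⁻¹ dy = Γ(β₁)Γ(1-β₁)(1+t)^{β₁-1}`, which the Möbius substitution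
`y = t w / (1 + t - t w)` reduces to a Beta integral; its Gamma factors cancel the normalisation
of `p_B`. -/

section Beta

variable {p q : ℝ}

lemma ofReal_rpow_mul_one_sub_rpow_eqOn :
    EqOn (fun u : ℝ => ((u ^ (p - 1) * (1 - u) ^ (q - 1) : ℝ) : ℂ))
      (fun u : ℝ => (u : ℂ) ^ ((p : ℂ) - 1) * (1 - (u : ℂ)) ^ ((q : ℂ) - 1)) (Ioo 0 1) := by
  intro u hu
  simp only [Complex.ofReal_mul, Complex.ofReal_cpow hu.1.le,
    Complex.ofReal_cpow (sub_nonneg.2 hu.2.le)]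
  push_cast
  rfl

lemma integrableOn_rpow_mul_one_sub_rpow (hp : 0 < p) (hq : 0 < q) :
    IntegrableOn (fun u : ℝ => u ^ (p - 1) * (1 - u) ^ (q - 1)) (Ioo 0 1) := by
  have hC : IntegrableOn
      (fun u : ℝ => (u : ℂ) ^ ((p : ℂ) - 1) * (1 - (u : ℂ)) ^ ((q : ℂ) - 1)) (Ioo 0 1) :=
    (intervalIntegrable_iff_integrableOn_Ioo_of_le zero_le_one).mp
      (Complex.betaIntegral_convergent (by simpa using hp) (by simpa using hq))
  exact (hC.congr_fun ofReal_rpow_mul_one_sub_rpow_eqOn.symm measurableSet_Ioo).re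

lemma integral_rpow_mul_one_sub_rpow (hp : 0 < p) (hq : 0 < q) :
    ∫ u in Ioo (0 : ℝ) 1, u ^ (p - 1) * (1 - u) ^ (q - 1) = Gamma p * Gamma q / Gamma (p + q) := by
  have hB : Complex.betaIntegral p q = ↑(∫ u in Ioo (0 : ℝ) 1, u ^ (p - 1) * (1 - u) ^ (q - 1)) := by
    rw [Complex.betaIntegral, intervalIntegral.integral_of_le zero_le_one,
      integral_Ioc_eq_integral_Ioo, ← setIntegral_congr_fun measurableSet_Ioo
        ofReal_rpow_mul_one_sub_rpow_eqOn]
    exact integral_ofReal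
  apply Complex.ofReal_injective
  rw [← hB, Complex.betaIntegral_eq_Gamma_mul_div _ _ (by simpa using hp) (by simpa using hq)]
  push_cast
  rw [← Complex.ofReal_add]
  simp only [Complex.Gamma_ofReal]

lemma integrableOn_add_rpow_mul_rpow_mul_one_sub_rpow {c r : ℝ} (hc : 0 < c) (hp : 0 < p)
    (hq : 0 < q) :
    IntegrableOn (fun u : ℝ => (c + u) ^ r * (u ^ (p - 1) * (1 - u) ^ (q - 1))) (Ioo 0 1) := by
  refine (integrableOn_rpow_mul_one_sub_rpow hp hq).bdd_mul (c := max (c ^ r) ((c + 1) ^ r))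
    (by fun_prop : Measurable fun u : ℝ => (c + u) ^ r).aestronglyMeasurable ?_
  filter_upwards [ae_restrict_mem measurableSet_Ioo] with u hu
  have hcu : 0 < c + u := by linarith [hu.1]
  rw [norm_of_nonneg (rpow_nonneg hcu.le r)]
  rcases le_or_gt 0 r with hr | hr
  · exact (rpow_le_rpow hcu.le (by linarith [hu.2]) hr).trans (le_max_right _ _)
  · exact (rpow_le_rpow_of_nonpos hc (by linarith [hu.1]) hr.le).trans (le_max_left _ _)

end Beta

section AffineSubstitution

variable {a b : ℝ}

lemma image_affine_Ioo_zero_one (hab : a < b) :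
    (fun u => (b - a) * u + a) '' Ioo 0 1 = Ioo a b := by
  simp [image_affine_Ioo (sub_pos.2 hab)]

lemma hasDerivWithinAt_affine (a b u : ℝ) (s : Set ℝ) :
    HasDerivWithinAt (fun u => (b - a) * u + a) (b - a) s u := by
  simpa using ((hasDerivAt_id u).const_mul (b - a)).add_const a |>.hasDerivWithinAt

lemma injective_affine (hab : a < b) : Injective fun u => (b - a) * u + a :=
  (add_left_injective a).comp (mul_right_injective₀ (sub_pos.2 hab).ne')

lemma integral_Ioo_eq_integral_Ioo_zero_one (hab : a < b) (g : ℝ → ℝ) :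
    ∫ t in Ioo a b, g t = ∫ u in Ioo 0 1, (b - a) * g ((b - a) * u + a) := by
  rw [← image_affine_Ioo_zero_one hab, integral_image_eq_integral_abs_deriv_smul measurableSet_Ioo
    (fun u _ => hasDerivWithinAt_affine a b u _) (injective_affine hab).injOn,
    abs_of_pos (sub_pos.2 hab)]
  rfl

lemma integrableOn_Ioo_iff_integrableOn_Ioo_zero_one (hab : a < b) (g : ℝ → ℝ) :
    IntegrableOn g (Ioo a b) ↔ IntegrableOn (fun u => (b - a) * g ((b - a) * u + a)) (Ioo 0 1) := by
  rw [← image_affine_Ioo_zero_one hab, integrableOn_image_iff_integrableOn_abs_deriv_smul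
    measurableSet_Ioo (fun u _ => hasDerivWithinAt_affine a b u _) (injective_affine hab).injOn,
    abs_of_pos (sub_pos.2 hab)]
  rfl

end AffineSubstitution

section ThreeFactor

variable {a b c p q r : ℝ}

lemma eqOn_affine_rpow_mul_rpow_mul_rpow (hab : a < b) (hca : 0 < c + a) :
    EqOn (fun u => (b - a) * ((c + ((b - a) * u + a)) ^ p * ((b - a) * u + a - a) ^ q *
        (b - ((b - a) * u + a)) ^ r))
      (fun u => (b - a) ^ (1 + p + q + r) * (((c + a) / (b - a) + u) ^ p * u ^ q * (1 - u) ^ r))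
      (Ioo 0 1) := by
  intro u hu
  have hS : 0 < b - a := sub_pos.2 hab
  have hT : 0 < (c + a) / (b - a) + u := by have := div_pos hca hS; linarith [hu.1]
  have e₁ : c + ((b - a) * u + a) = (b - a) * ((c + a) / (b - a) + u) := by field_simp; ring
  have e₂ : (b - a) * u + a - a = (b - a) * u := by ring
  have e₃ : b - ((b - a) * u + a) = (b - a) * (1 - u) := by ring
  simp only [e₁, e₂, e₃]
  rw [mul_rpow hS.le hT.le, mul_rpow hS.le hu.1.le, mul_rpow hS.le (by linarith [hu.2]),
    rpow_add hS, rpow_add hS, rpow_add hS, rpow_one]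
  ring

lemma integral_Ioo_rpow_mul_rpow_mul_rpow (hab : a < b) (hca : 0 < c + a)
    (hpqr : p + q + r = -1) :
    ∫ t in Ioo a b, (c + t) ^ p * (t - a) ^ q * (b - t) ^ r
      = ∫ u in Ioo 0 1, ((c + a) / (b - a) + u) ^ p * u ^ q * (1 - u) ^ r := by
  rw [integral_Ioo_eq_integral_Ioo_zero_one hab,
    setIntegral_congr_fun measurableSet_Ioo (eqOn_affine_rpow_mul_rpow_mul_rpow hab hca)]
  simp [show 1 + p + q + r = 0 by linarith]

lemma integrableOn_Ioo_rpow_mul_rpow_mul_rpow (hab : a < b) (hca : 0 < c + a) (hq : -1 < q)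
    (hr : -1 < r) :
    IntegrableOn (fun t => (c + t) ^ p * (t - a) ^ q * (b - t) ^ r) (Ioo a b) := by
  rw [integrableOn_Ioo_iff_integrableOn_Ioo_zero_one hab]
  refine IntegrableOn.congr_fun ?_ (eqOn_affine_rpow_mul_rpow_mul_rpow hab hca).symm
    measurableSet_Ioo
  have h := integrableOn_add_rpow_mul_rpow_mul_one_sub_rpow (r := p)
    (div_pos hca (sub_pos.2 hab)) (neg_lt_iff_pos_add.1 hq) (neg_lt_iff_pos_add.1 hr)
  simp only [add_sub_cancel_right, ← mul_assoc] at h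
  exact h.const_mul _

end ThreeFactor

lemma PD_sub_add_eq_integral_Ioo {β₁ β₂ a b c : ℝ} (hab : a < b) (hca : 0 < c + a) :
    PD β₁ β₂ (b - a) (c + a) = (Gamma (β₁ + β₂ - 1) * Gamma (1 - (β₁ + β₂ - 1)))⁻¹ *
      ∫ t in Ioo a b, (c + t) ^ (β₁ - 1) * (t - a) ^ (β₂ - 1) * (b - t) ^ (-(β₁ + β₂ - 1)) := by
  rw [PD, intervalIntegral.integral_of_le zero_le_one, integral_Ioc_eq_integral_Ioo,
    integral_Ioo_rpow_mul_rpow_mul_rpow hab hca (by ring)]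

section Mobius

variable {t α γ : ℝ}

lemma image_mobius_Ioo (ht : 0 < t) :
    (fun w => t * w / (1 + t - t * w)) '' Ioo 0 1 = Ioo 0 t := by
  ext y
  constructor
  · rintro ⟨w, ⟨hw₀, hw₁⟩, rfl⟩
    have hD : 0 < 1 + t - t * w := by nlinarith
    refine ⟨by positivity, ?_⟩
    rw [div_lt_iff₀ hD]
    nlinarith [mul_pos ht (sub_pos.2 hw₁)]
  · rintro ⟨hy₀, hyt⟩
    refine ⟨y * (1 + t) / (t * (1 + y)), ⟨by positivity, ?_⟩, ?_⟩
    · rw [div_lt_one (by positivity)]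
      nlinarith
    · have : t + t ^ 2 ≠ 0 := by positivity
      field_simp
      ring

lemma injOn_mobius (ht : 0 < t) : InjOn (fun w => t * w / (1 + t - t * w)) (Ioo 0 1) := by
  intro w₁ hw₁ w₂ hw₂ h
  have hD₁ : 0 < 1 + t - t * w₁ := by nlinarith [hw₁.2]
  have hD₂ : 0 < 1 + t - t * w₂ := by nlinarith [hw₂.2]
  rw [div_eq_div_iff hD₁.ne' hD₂.ne'] at h
  exact mul_left_cancel₀ (by positivity : t * (1 + t) ≠ 0) (by linear_combination h)

lemma hasDerivWithinAt_mobius (ht : 0 < t) {w : ℝ} (hw : w ∈ Ioo (0 : ℝ) 1) :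
    HasDerivWithinAt (fun w => t * w / (1 + t - t * w)) (t * (1 + t) / (1 + t - t * w) ^ 2)
      (Ioo 0 1) w := by
  have hD : 1 + t - t * w ≠ 0 := by nlinarith [hw.2]
  refine (((hasDerivAt_id w).const_mul t).div
    (((hasDerivAt_id w).const_mul t).const_sub (1 + t)) hD).hasDerivWithinAt.congr_deriv ?_
  simp only [id, mul_one]
  ring

/-- Writing the positive bases as exponentials makes this a linear identity between exponents. -/
lemma rpow_mobius_identity {T U V W D : ℝ} (hT : 0 < T) (hU : 0 < U) (hV : 0 < V) (hW : 0 < W)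
    (hD : 0 < D) :
    T * U / D ^ 2 * ((T * W / D) ^ (α - 1) * (T * U * V / D) ^ (γ - 1) * (U / D) ^ (-(α + γ)))
      = T ^ (α + γ - 1) * U ^ (-α) * (W ^ (α - 1) * V ^ (γ - 1)) := by
  obtain ⟨T, rfl⟩ : ∃ t, exp t = T := ⟨log T, exp_log hT⟩
  obtain ⟨U, rfl⟩ : ∃ u, exp u = U := ⟨log U, exp_log hU⟩
  obtain ⟨V, rfl⟩ : ∃ v, exp v = V := ⟨log V, exp_log hV⟩
  obtain ⟨W, rfl⟩ : ∃ w, exp w = W := ⟨log W, exp_log hW⟩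
  obtain ⟨D, rfl⟩ : ∃ d, exp d = D := ⟨log D, exp_log hD⟩
  simp only [← exp_nat_mul, ← exp_add, ← exp_sub, ← exp_mul, exp_eq_exp]
  push_cast
  ring

lemma eqOn_mobius_rpow_mul_rpow_mul_one_add_rpow (ht : 0 < t) :
    EqOn (fun w => |t * (1 + t) / (1 + t - t * w) ^ 2| •
        (fun y => y ^ (α - 1) * (t - y) ^ (γ - 1) * (1 + y) ^ (-(α + γ))) (t * w / (1 + t - t * w)))
      (fun w => t ^ (α + γ - 1) * (1 + t) ^ (-α) * (w ^ (α - 1) * (1 - w) ^ (γ - 1)))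
      (Ioo 0 1) := by
  intro w hw
  have hD : 0 < 1 + t - t * w := by nlinarith [hw.2]
  have e₁ : t - t * w / (1 + t - t * w) = t * (1 + t) * (1 - w) / (1 + t - t * w) := by
    field_simp; ring
  have e₂ : 1 + t * w / (1 + t - t * w) = (1 + t) / (1 + t - t * w) := by field_simp; ring
  simp only [smul_eq_mul, e₁, e₂]
  rw [abs_of_pos (by positivity)]
  exact rpow_mobius_identity ht (by linarith) (by linarith [hw.2]) hw.1 hD

lemma integral_Ioo_rpow_mul_rpow_mul_one_add_rpow (hα : 0 < α) (hγ : 0 < γ) (ht : 0 < t) :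
    ∫ y in Ioo 0 t, y ^ (α - 1) * (t - y) ^ (γ - 1) * (1 + y) ^ (-(α + γ))
      = t ^ (α + γ - 1) * (1 + t) ^ (-α) * (Gamma α * Gamma γ / Gamma (α + γ)) := by
  rw [← image_mobius_Ioo ht, integral_image_eq_integral_abs_deriv_smul measurableSet_Ioo
      (fun w hw => hasDerivWithinAt_mobius ht hw) (injOn_mobius ht),
    setIntegral_congr_fun measurableSet_Ioo (eqOn_mobius_rpow_mul_rpow_mul_one_add_rpow ht),
    integral_const_mul, integral_rpow_mul_one_sub_rpow hα hγ]

lemma integrableOn_Ioo_rpow_mul_rpow_mul_one_add_rpow (hα : 0 < α) (hγ : 0 < γ) (ht : 0 < t) :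
    IntegrableOn (fun y => y ^ (α - 1) * (t - y) ^ (γ - 1) * (1 + y) ^ (-(α + γ))) (Ioo 0 t) := by
  rw [← image_mobius_Ioo ht, integrableOn_image_iff_integrableOn_abs_deriv_smul measurableSet_Ioo
      (fun w hw => hasDerivWithinAt_mobius ht hw) (injOn_mobius ht)]
  exact IntegrableOn.congr_fun ((integrableOn_rpow_mul_one_sub_rpow hα hγ).const_mul _)
    (eqOn_mobius_rpow_mul_rpow_mul_one_add_rpow ht).symm measurableSet_Ioo

end Mobius

lemma integral_Ioo_integral_Ioo_swap {a b : ℝ} {f : ℝ → ℝ → ℝ} (hf : Measurable (uncurry f))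
    (hf₀ : ∀ y t, a < y → y < t → t < b → 0 ≤ f y t)
    (hsec : ∀ t ∈ Ioo a b, IntegrableOn (fun y => f y t) (Ioo a t))
    (hint : IntegrableOn (fun t => ∫ y in Ioo a t, f y t) (Ioo a b)) :
    ∫ y in Ioo a b, ∫ t in Ioo y b, f y t = ∫ t in Ioo a b, ∫ y in Ioo a t, f y t := by
  set μ := volume.restrict (Ioo a b)
  set g : ℝ → ℝ → ℝ := fun y t => if y < t then f y t else 0
  have hg : Measurable (uncurry g) :=
    Measurable.ite (measurableSet_lt measurable_fst measurable_snd) hf measurable_const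
  have hg_snd (y : ℝ) : (fun t => g y t) = (Ioi y).indicator (f y) := by
    ext t; simp [g, indicator_apply]
  have hg_fst (t : ℝ) : (fun y => g y t) = (Iio t).indicator (fun y => f y t) := by
    ext y; simp [g, indicator_apply]
  have hIoi {y : ℝ} (hy : y ∈ Ioo a b) : Ioi y ∩ Ioo a b = Ioo y b := by
    ext s; simp only [mem_inter_iff, mem_Ioi, mem_Ioo]; grind
  have hIio {t : ℝ} (ht : t ∈ Ioo a b) : Iio t ∩ Ioo a b = Ioo a t := by
    ext s; simp only [mem_inter_iff, mem_Iio, mem_Ioo]; grind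
  have hint_snd : EqOn (fun y => ∫ t, g y t ∂μ) (fun y => ∫ t in Ioo y b, f y t) (Ioo a b) := by
    intro y hy
    simp only [hg_snd, integral_indicator measurableSet_Ioi, μ,
      Measure.restrict_restrict measurableSet_Ioi, hIoi hy]
  have hint_fst : EqOn (fun t => ∫ y, g y t ∂μ) (fun t => ∫ y in Ioo a t, f y t) (Ioo a b) := by
    intro t ht
    simp only [hg_fst, integral_indicator measurableSet_Iio, μ,
      Measure.restrict_restrict measurableSet_Iio, hIio ht]
  have hg_int : Integrable (uncurry g) (μ.prod μ) := by
    rw [integrable_prod_iff' hg.aestronglyMeasurable]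
    refine ⟨?_, hint.congr_fun_ae ?_⟩
    · filter_upwards [ae_restrict_mem measurableSet_Ioo] with t ht
      simp only [uncurry_apply_pair, hg_fst, integrable_indicator_iff measurableSet_Iio]
      rw [IntegrableOn, Measure.restrict_restrict measurableSet_Iio, hIio ht]
      exact hsec t ht
    · filter_upwards [ae_restrict_mem measurableSet_Ioo] with t ht
      refine (hint_fst ht).symm.trans (integral_congr_ae ?_)
      filter_upwards [ae_restrict_mem measurableSet_Ioo] with y hy
      simp only [uncurry_apply_pair, g]
      split_ifs with hyt
      · exact (norm_of_nonneg (hf₀ y t hy.1 hyt ht.2)).symm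
      · exact norm_zero.symm
  calc ∫ y in Ioo a b, ∫ t in Ioo y b, f y t = ∫ y, ∫ t, g y t ∂μ ∂μ :=
        (setIntegral_congr_fun measurableSet_Ioo hint_snd).symm
    _ = ∫ t, ∫ y, g y t ∂μ ∂μ := integral_integral_swap hg_int
    _ = ∫ t in Ioo a b, ∫ y in Ioo a t, f y t := setIntegral_congr_fun measurableSet_Ioo hint_fst

section Euler

variable {β t : ℝ}

lemma integral_Ioo_rpow_neg_mul_rpow_mul_one_add_inv (hβ : β ∈ Ioo (0 : ℝ) 1) (ht : 0 < t) :
    ∫ y in Ioo 0 t, y ^ (-β) * (t - y) ^ (β - 1) * (1 + y)⁻¹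
      = Gamma β * Gamma (1 - β) * (1 + t) ^ (β - 1) := by
  have h := integral_Ioo_rpow_mul_rpow_mul_one_add_rpow (sub_pos.2 hβ.2) hβ.1 ht
  simp only [sub_sub_cancel_left, sub_add_cancel, sub_self, rpow_zero, rpow_neg_one, neg_sub,
    Gamma_one, div_one, one_mul] at h
  rw [h]
  ring

lemma integrableOn_Ioo_rpow_neg_mul_rpow_mul_one_add_inv (hβ : β ∈ Ioo (0 : ℝ) 1) (ht : 0 < t) :
    IntegrableOn (fun y => y ^ (-β) * (t - y) ^ (β - 1) * (1 + y)⁻¹) (Ioo 0 t) := by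
  have h := integrableOn_Ioo_rpow_mul_rpow_mul_one_add_rpow (sub_pos.2 hβ.2) hβ.1 ht
  simpa only [sub_sub_cancel_left, sub_add_cancel, rpow_neg_one] using h

end Euler

lemma pB_one_mul_PD_sub {β₁ β₂ x y : ℝ} (hy : 0 < y) (hyx : y < x) :
    pB β₁ 1 y * PD β₂ β₁ (x - y) y
      = (Gamma β₁ * Gamma (1 - β₁))⁻¹ * (Gamma (β₁ + β₂ - 1) * Gamma (1 - (β₁ + β₂ - 1)))⁻¹ *
        ∫ t in Ioo y x, y ^ (-β₁) * (t - y) ^ (β₁ - 1) * (1 + y)⁻¹ *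
          (t ^ (β₂ - 1) * (x - t) ^ (-(β₁ + β₂ - 1))) := by
  have hPD := PD_sub_add_eq_integral_Ioo (β₁ := β₂) (β₂ := β₁) (c := 0) hyx (by simpa using hy)
  simp only [zero_add, add_comm β₂ β₁] at hPD
  have hfactor : ∫ t in Ioo y x, y ^ (-β₁) * (t - y) ^ (β₁ - 1) * (1 + y)⁻¹ *
        (t ^ (β₂ - 1) * (x - t) ^ (-(β₁ + β₂ - 1)))
      = y ^ (-β₁) * (1 + y)⁻¹ *
        ∫ t in Ioo y x, t ^ (β₂ - 1) * (t - y) ^ (β₁ - 1) * (x - t) ^ (-(β₁ + β₂ - 1)) := by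
    rw [← integral_const_mul]
    congr 1 with t
    ring
  rw [pB, hPD, hfactor, one_div, inv_rpow hy.le, ← rpow_neg hy.le]
  ring

lemma integral_Ioo_integral_Ioo_overshoot_kernel {β₁ β₂ x : ℝ} (h₁ : β₁ ∈ Ioo (0 : ℝ) 1)
    (h₁₂ : β₁ + β₂ - 1 ∈ Ioo (0 : ℝ) 1) (hx : 0 < x) :
    ∫ y in Ioo 0 x, ∫ t in Ioo y x, y ^ (-β₁) * (t - y) ^ (β₁ - 1) * (1 + y)⁻¹ *
        (t ^ (β₂ - 1) * (x - t) ^ (-(β₁ + β₂ - 1)))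
      = Gamma β₁ * Gamma (1 - β₁) *
        ∫ t in Ioo 0 x, (1 + t) ^ (β₁ - 1) * t ^ (β₂ - 1) * (x - t) ^ (-(β₁ + β₂ - 1)) := by
  have hinner : EqOn (fun t => ∫ y in Ioo 0 t, y ^ (-β₁) * (t - y) ^ (β₁ - 1) * (1 + y)⁻¹ *
        (t ^ (β₂ - 1) * (x - t) ^ (-(β₁ + β₂ - 1))))
      (fun t => Gamma β₁ * Gamma (1 - β₁) *
        ((1 + t) ^ (β₁ - 1) * t ^ (β₂ - 1) * (x - t) ^ (-(β₁ + β₂ - 1)))) (Ioo 0 x) := by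
    intro t ht
    simp only [integral_mul_const, integral_Ioo_rpow_neg_mul_rpow_mul_one_add_inv h₁ ht.1]
    ring
  have hnonneg (y t : ℝ) (hy : 0 < y) (hyt : y < t) (htx : t < x) :
      0 ≤ y ^ (-β₁) * (t - y) ^ (β₁ - 1) * (1 + y)⁻¹ * (t ^ (β₂ - 1) * (x - t) ^ (-(β₁ + β₂ - 1))) :=
    mul_nonneg (mul_nonneg (mul_nonneg (rpow_nonneg hy.le _) (rpow_nonneg (by linarith) _))
      (by positivity)) (mul_nonneg (rpow_nonneg (by linarith) _) (rpow_nonneg (by linarith) _))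
  have hint : IntegrableOn
      (fun t => (1 + t) ^ (β₁ - 1) * t ^ (β₂ - 1) * (x - t) ^ (-(β₁ + β₂ - 1))) (Ioo 0 x) := by
    simpa only [sub_zero] using integrableOn_Ioo_rpow_mul_rpow_mul_rpow (c := 1) hx (by norm_num)
      (by linarith [h₁.2, h₁₂.1] : -1 < β₂ - 1) (by linarith [h₁₂.2] : -1 < -(β₁ + β₂ - 1))
  rw [integral_Ioo_integral_Ioo_swap (by fun_prop) hnonneg
      (fun t ht => (integrableOn_Ioo_rpow_neg_mul_rpow_mul_one_add_inv h₁ ht.1).mul_const _)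
      (IntegrableOn.congr_fun (hint.const_mul _) hinner.symm measurableSet_Ioo),
    setIntegral_congr_fun measurableSet_Ioo hinner, integral_const_mul]

theorem stmt5_general (β₁ β₂ : ℝ) (h₁ : β₁ ∈ Set.Ioo (0 : ℝ) 1)
    (h₁₂ : β₁ + β₂ - 1 ∈ Set.Ioo (0 : ℝ) 1) (x : ℝ) (hx : 0 < x) :
    PD β₁ β₂ x 1 = ∫ y in (0 : ℝ)..x, pB β₁ 1 y * PD β₂ β₁ (x - y) y := by
  have hΓ₁ := (Gamma_pos_of_pos h₁.1).ne'
  have hΓ₂ := (Gamma_pos_of_pos (sub_pos.2 h₁.2)).ne'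
  have hLHS := PD_sub_add_eq_integral_Ioo (β₁ := β₁) (β₂ := β₂) (a := 0) (c := 1) hx (by norm_num)
  simp only [sub_zero, add_zero] at hLHS
  rw [hLHS, intervalIntegral.integral_of_le hx.le, integral_Ioc_eq_integral_Ioo,
    setIntegral_congr_fun measurableSet_Ioo fun y hy => pB_one_mul_PD_sub hy.1 hy.2,
    integral_const_mul, integral_Ioo_integral_Ioo_overshoot_kernel h₁ h₁₂ hx]
  field_simp

/-- Proposition `prop:first_intersection`:
`P_D^{β₁,β₂}(x ∣ 1) = ∫_0^x p_B^{β₁}(y ∣ 1) P_D^{β₂,β₁}(x−y ∣ y) dy`. -/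
theorem stmt5 (β₁ β₂ : ℝ) (h₁ : β₁ ∈ Set.Ioo (0 : ℝ) 1) (h₂ : β₂ ∈ Set.Ioo (0 : ℝ) 1)
    (h₁₂ : β₁ + β₂ - 1 ∈ Set.Ioo (0 : ℝ) 1) (x : ℝ) (hx : 0 < x) :
    PD β₁ β₂ x 1 = ∫ y in (0 : ℝ)..x, pB β₁ 1 y * PD β₂ β₁ (x - y) y :=
  stmt5_general β₁ β₂ h₁ h₁₂ x hx
end

section
/- Let β₁, β₂ ∈ (0,1) with β₁₂ := β₁ + β₂ − 1 ∈ (0,1) and let a > 0. Then the function x ↦ P_D^{β₁,β₂}(x | a), x > 0, takes values in [0,1], is nondecreasing in x, tends to 0 as x → 0+, and tends to 1 as x → ∞. In particular it is the cumulative distribution function of a probability measure on (0,∞). -/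
/-!
Substituting `t = a / x`, `P_D(x ∣ a)` is `G(a / x) / (Γ(β₁₂) Γ(1 - β₁₂))` with
`G(t) = ∫₀¹ (t + y)^(β₁-1) w(y) dy` and `w(y) = y^(β₂-1) (1-y)^(-β₁₂)`. As `β₁ < 1`, `G` is
nonincreasing on `[0, ∞)`, and `G(0)` is the Beta integral `B(β₁₂, 1 - β₁₂) = Γ(β₁₂) Γ(1 - β₁₂)`.
Since `y^(β₁-1) w(y)` dominates every integrand, dominated convergence makes `G` continuous on
`[0, ∞)` with `G(t) → 0` as `t → ∞`. So `x ↦ P_D(x ∣ a)` is continuous, nondecreasing and increases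
from `0` to `1`; extended by `0` on `(-∞, 0]`, it is a Stieltjes function of a probability measure.
-/

open MeasureTheory Real Filter Topology

open Set

lemma ofReal_betaIntegrand {u v y : ℝ} (hy : y ∈ Icc (0 : ℝ) 1) :
    ((y ^ (u - 1) * (1 - y) ^ (v - 1) : ℝ) : ℂ) =
      (y : ℂ) ^ ((u : ℂ) - 1) * (1 - (y : ℂ)) ^ ((v : ℂ) - 1) := by
  rw [Complex.ofReal_mul, Complex.ofReal_cpow hy.1, Complex.ofReal_cpow (sub_nonneg.2 hy.2)]
  push_cast
  rfl

lemma intervalIntegrable_betaIntegrand {u v : ℝ} (hu : 0 < u) (hv : 0 < v) :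
    IntervalIntegrable (fun y : ℝ => y ^ (u - 1) * (1 - y) ^ (v - 1)) volume 0 1 := by
  have h := Complex.betaIntegral_convergent (u := u) (v := v) (by simpa) (by simpa)
  rw [intervalIntegrable_iff] at h ⊢
  refine (Integrable.re h).congr
    ((ae_restrict_iff' measurableSet_uIoc).2 (.of_forall fun y hy => ?_))
  rw [uIoc_of_le zero_le_one] at hy
  simp [← ofReal_betaIntegrand (u := u) (v := v) (Ioc_subset_Icc_self hy)]

lemma integral_betaIntegrand {u v : ℝ} (hu : 0 < u) (hv : 0 < v) :
    ∫ y in (0 : ℝ)..1, y ^ (u - 1) * (1 - y) ^ (v - 1) = ProbabilityTheory.beta u v := by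
  rw [ProbabilityTheory.beta_eq_betaIntegralReal u v hu hv, Complex.betaIntegral,
    ← Complex.ofReal_re (∫ y in (0 : ℝ)..1, _), ← intervalIntegral.integral_ofReal]
  congr 1
  refine intervalIntegral.integral_congr fun y hy => ?_
  exact ofReal_betaIntegrand (by rwa [uIcc_of_le zero_le_one] at hy)

noncomputable def shiftedRpowIntegral (p : ℝ) (w : ℝ → ℝ) (t : ℝ) : ℝ :=
  ∫ y in (0 : ℝ)..1, (t + y) ^ p * w y

namespace shiftedRpowIntegral

variable {p : ℝ} {w : ℝ → ℝ}

lemma ae_norm_integrand_le (hp : p ≤ 0) (hw : ∀ y ∈ Ioc (0 : ℝ) 1, 0 ≤ w y) {t : ℝ} (ht : 0 ≤ t) :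
    ∀ᵐ y, y ∈ uIoc (0 : ℝ) 1 → ‖(t + y) ^ p * w y‖ ≤ y ^ p * w y := by
  refine .of_forall fun y hy => ?_
  rw [uIoc_of_le zero_le_one] at hy
  have hwy := hw y hy
  rw [Real.norm_of_nonneg (mul_nonneg (rpow_nonneg (by linarith [hy.1]) p) hwy)]
  exact mul_le_mul_of_nonneg_right (rpow_le_rpow_of_nonpos hy.1 (le_add_of_nonneg_left ht) hp) hwy

lemma intervalIntegrable_integrand (hp : p ≤ 0) (hw_meas : Measurable w)
    (hw : ∀ y ∈ Ioc (0 : ℝ) 1, 0 ≤ w y)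
    (hint : IntervalIntegrable (fun y => y ^ p * w y) volume 0 1)
    {t : ℝ} (ht : 0 ≤ t) : IntervalIntegrable (fun y => (t + y) ^ p * w y) volume 0 1 :=
  hint.mono_fun' (by fun_prop : Measurable fun y => (t + y) ^ p * w y).aestronglyMeasurable
    ((ae_restrict_iff' measurableSet_uIoc).2 (ae_norm_integrand_le hp hw ht))

lemma tendsto_of_tendsto_integrand (hp : p ≤ 0) (hw_meas : Measurable w)
    (hw : ∀ y ∈ Ioc (0 : ℝ) 1, 0 ≤ w y)
    (hint : IntervalIntegrable (fun y => y ^ p * w y) volume 0 1)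
    {l : Filter ℝ} [l.IsCountablyGenerated] (hl : ∀ᶠ t in l, 0 ≤ t) {g : ℝ → ℝ}
    (hlim : ∀ y ∈ Ioc (0 : ℝ) 1, Tendsto (fun t => (t + y) ^ p * w y) l (𝓝 (g y))) :
    Tendsto (shiftedRpowIntegral p w) l (𝓝 (∫ y in (0 : ℝ)..1, g y)) := by
  refine intervalIntegral.tendsto_integral_filter_of_dominated_convergence _
    (.of_forall fun t => (by fun_prop : Measurable fun y => (t + y) ^ p * w y).aestronglyMeasurable)
    (hl.mono fun t ht => ae_norm_integrand_le hp hw ht) hint (.of_forall fun y hy => hlim y ?_)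
  rwa [uIoc_of_le zero_le_one] at hy

lemma nonneg (hw : ∀ y ∈ Ioc (0 : ℝ) 1, 0 ≤ w y) {t : ℝ} (ht : 0 ≤ t) :
    0 ≤ shiftedRpowIntegral p w t := by
  rw [shiftedRpowIntegral, intervalIntegral.integral_of_le zero_le_one]
  exact setIntegral_nonneg measurableSet_Ioc fun y hy =>
    mul_nonneg (rpow_nonneg (by linarith [hy.1]) p) (hw y hy)

lemma antitoneOn (hp : p ≤ 0) (hw_meas : Measurable w) (hw : ∀ y ∈ Ioc (0 : ℝ) 1, 0 ≤ w y)
    (hint : IntervalIntegrable (fun y => y ^ p * w y) volume 0 1) :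
    AntitoneOn (shiftedRpowIntegral p w) (Ici 0) := by
  intro t (ht : 0 ≤ t) t' ht' htt'
  refine intervalIntegral.integral_mono_on_of_le_Ioo zero_le_one
    (intervalIntegrable_integrand hp hw_meas hw hint ht')
    (intervalIntegrable_integrand hp hw_meas hw hint ht) fun y hy => ?_
  exact mul_le_mul_of_nonneg_right
    (rpow_le_rpow_of_nonpos (by linarith [hy.1]) (by linarith) hp) (hw y (Ioo_subset_Ioc_self hy))

lemma continuousOn (hp : p ≤ 0) (hw_meas : Measurable w) (hw : ∀ y ∈ Ioc (0 : ℝ) 1, 0 ≤ w y)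
    (hint : IntervalIntegrable (fun y => y ^ p * w y) volume 0 1) :
    ContinuousOn (shiftedRpowIntegral p w) (Ici 0) := by
  intro t₀ (ht₀ : 0 ≤ t₀)
  refine tendsto_of_tendsto_integrand hp hw_meas hw hint self_mem_nhdsWithin fun y hy => ?_
  have hne : t₀ + y ≠ 0 := by linarith [hy.1]
  exact (((continuousAt_id.add continuousAt_const).rpow_const (.inl hne)).mul
    continuousAt_const).continuousWithinAt

lemma tendsto_atTop (hp : p < 0) (hw_meas : Measurable w) (hw : ∀ y ∈ Ioc (0 : ℝ) 1, 0 ≤ w y)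
    (hint : IntervalIntegrable (fun y => y ^ p * w y) volume 0 1) :
    Tendsto (shiftedRpowIntegral p w) atTop (𝓝 0) := by
  simpa using tendsto_of_tendsto_integrand hp.le hw_meas hw hint (eventually_ge_atTop 0)
    (g := fun _ => 0) fun y _ => by
      simpa using ((tendsto_rpow_neg_atTop (neg_pos.2 hp)).comp
        (tendsto_atTop_add_const_right _ y tendsto_id)).mul_const (w y)

end shiftedRpowIntegral

lemma nonneg_of_monotoneOn_Ioi {F : ℝ → ℝ} (hmono : MonotoneOn F (Ioi 0))
    (h0 : Tendsto F (𝓝[>] 0) (𝓝 0)) {x : ℝ} (hx : 0 < x) : 0 ≤ F x :=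
  le_of_tendsto h0 (eventually_of_mem (Ioc_mem_nhdsGT hx) fun _ hz =>
    hmono hz.1 (mem_Ioi.2 hx) hz.2)

lemma monotone_indicator_Ioi {F : ℝ → ℝ} (hmono : MonotoneOn F (Ioi 0))
    (h0 : Tendsto F (𝓝[>] 0) (𝓝 0)) : Monotone ((Ioi 0).indicator F) := by
  intro x y hxy
  by_cases hx : x ∈ Ioi 0
  · have hy : y ∈ Ioi 0 := lt_of_lt_of_le hx hxy
    rw [indicator_of_mem hx, indicator_of_mem hy]
    exact hmono hx hy hxy
  · rw [indicator_of_notMem hx]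
    exact indicator_nonneg (fun z hz => nonneg_of_monotoneOn_Ioi hmono h0 hz) y

lemma continuousWithinAt_indicator_Ioi {F : ℝ → ℝ}
    (hcont : ∀ x, 0 < x → ContinuousWithinAt F (Ici x) x) (h0 : Tendsto F (𝓝[>] 0) (𝓝 0))
    (x : ℝ) : ContinuousWithinAt ((Ioi 0).indicator F) (Ici x) x := by
  rcases lt_trichotomy x 0 with hx | rfl | hx
  · refine (continuousAt_const (y := 0)).continuousWithinAt.congr_of_eventuallyEq
      (eventually_nhdsWithin_of_eventually_nhds ?_) (indicator_of_notMem hx.not_gt.elim _)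
    filter_upwards [eventually_lt_nhds hx] with z hz
    exact indicator_of_notMem (fun h : 0 < z => (hz.trans h).false) _
  · rw [← continuousWithinAt_Ioi_iff_Ici, ContinuousWithinAt,
      indicator_of_notMem (self_notMem_Ioi (a := (0 : ℝ)))]
    exact h0.congr' (eventually_nhdsWithin_of_forall fun z hz => (indicator_of_mem hz F).symm)
  · refine (hcont x hx).congr_of_eventuallyEq
      (eventually_nhdsWithin_of_eventually_nhds ?_) (indicator_of_mem hx F)
    filter_upwards [eventually_gt_nhds hx] with z hz using indicator_of_mem hz F

theorem exists_isProbabilityMeasure_measure_Iic_eq {F : ℝ → ℝ} (hmono : MonotoneOn F (Ioi 0))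
    (hcont : ∀ x, 0 < x → ContinuousWithinAt F (Ici x) x) (h0 : Tendsto F (𝓝[>] 0) (𝓝 0))
    (h1 : Tendsto F atTop (𝓝 1)) :
    ∃ μ : Measure ℝ, IsProbabilityMeasure μ ∧ μ (Ioi 0)ᶜ = 0 ∧
      ∀ x, 0 < x → μ (Iic x) = ENNReal.ofReal (F x) := by
  let G : StieltjesFunction ℝ :=
    ⟨(Ioi 0).indicator F, monotone_indicator_Ioi hmono h0,
      continuousWithinAt_indicator_Ioi hcont h0⟩
  have hbot : Tendsto G atBot (𝓝 0) :=
    tendsto_const_nhds.congr' <| (eventually_le_atBot 0).mono fun z hz =>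
      (indicator_of_notMem hz.not_gt F).symm
  have htop : Tendsto G atTop (𝓝 1) :=
    h1.congr' <| (eventually_gt_atTop 0).mono fun z hz => (indicator_of_mem hz F).symm
  refine ⟨G.measure, G.isProbabilityMeasure hbot htop, ?_, fun x hx => ?_⟩
  · rw [compl_Ioi, G.measure_Iic hbot]
    simp [G]
  · rw [G.measure_Iic hbot, sub_zero]
    exact congrArg ENNReal.ofReal (indicator_of_mem hx F)

namespace PD

variable {β₁ β₂ a x : ℝ}

noncomputable def weight (β₁ β₂ y : ℝ) : ℝ := y ^ (β₂ - 1) * (1 - y) ^ (-(β₁ + β₂ - 1))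

lemma eq_shiftedRpowIntegral :
    PD β₁ β₂ x a = (Gamma (β₁ + β₂ - 1) * Gamma (1 - (β₁ + β₂ - 1)))⁻¹ *
      shiftedRpowIntegral (β₁ - 1) (weight β₁ β₂) (a / x) := by
  simp only [PD, shiftedRpowIntegral, weight, mul_assoc]

lemma measurable_weight : Measurable (weight β₁ β₂) := by
  unfold weight
  fun_prop

lemma weight_nonneg : ∀ y ∈ Ioc (0 : ℝ) 1, 0 ≤ weight β₁ β₂ y :=
  fun _ hy => mul_nonneg (rpow_nonneg hy.1.le _) (rpow_nonneg (sub_nonneg.2 hy.2) _)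

lemma rpow_mul_weight_ae_eq :
    ∀ᵐ y, y ∈ uIoc (0 : ℝ) 1 → y ^ (β₁ - 1) * weight β₁ β₂ y =
      y ^ ((β₁ + β₂ - 1) - 1) * (1 - y) ^ ((1 - (β₁ + β₂ - 1)) - 1) := by
  refine .of_forall fun y hy => ?_
  rw [uIoc_of_le zero_le_one] at hy
  rw [weight, ← mul_assoc, ← rpow_add hy.1, sub_sub_cancel_left]
  ring_nf

lemma intervalIntegrable_rpow_mul_weight (hs : β₁ + β₂ - 1 ∈ Ioo (0 : ℝ) 1) :
    IntervalIntegrable (fun y => y ^ (β₁ - 1) * weight β₁ β₂ y) volume 0 1 :=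
  (intervalIntegrable_betaIntegrand hs.1 (sub_pos.2 hs.2)).congr_ae <|
    ((ae_restrict_iff' measurableSet_uIoc).2 rpow_mul_weight_ae_eq).mono fun _ h => h.symm

lemma shiftedRpowIntegral_zero (hs : β₁ + β₂ - 1 ∈ Ioo (0 : ℝ) 1) :
    shiftedRpowIntegral (β₁ - 1) (weight β₁ β₂) 0 =
      Gamma (β₁ + β₂ - 1) * Gamma (1 - (β₁ + β₂ - 1)) := by
  simp only [shiftedRpowIntegral, zero_add]
  rw [intervalIntegral.integral_congr_ae rpow_mul_weight_ae_eq,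
    integral_betaIntegrand hs.1 (sub_pos.2 hs.2), ProbabilityTheory.beta, add_sub_cancel,
    Gamma_one, div_one]

lemma gamma_mul_gamma_pos (hs : β₁ + β₂ - 1 ∈ Ioo (0 : ℝ) 1) :
    0 < Gamma (β₁ + β₂ - 1) * Gamma (1 - (β₁ + β₂ - 1)) :=
  mul_pos (Gamma_pos_of_pos hs.1) (Gamma_pos_of_pos (sub_pos.2 hs.2))

lemma antitoneOn_shiftedRpowIntegral (hβ₁ : β₁ < 1) (hs : β₁ + β₂ - 1 ∈ Ioo (0 : ℝ) 1) :
    AntitoneOn (shiftedRpowIntegral (β₁ - 1) (weight β₁ β₂)) (Ici 0) :=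
  shiftedRpowIntegral.antitoneOn (by linarith) measurable_weight weight_nonneg
    (intervalIntegrable_rpow_mul_weight hs)

lemma continuousOn_shiftedRpowIntegral (hβ₁ : β₁ < 1) (hs : β₁ + β₂ - 1 ∈ Ioo (0 : ℝ) 1) :
    ContinuousOn (shiftedRpowIntegral (β₁ - 1) (weight β₁ β₂)) (Ici 0) :=
  shiftedRpowIntegral.continuousOn (by linarith) measurable_weight weight_nonneg
    (intervalIntegrable_rpow_mul_weight hs)

lemma mem_Icc (hβ₁ : β₁ < 1) (hs : β₁ + β₂ - 1 ∈ Ioo (0 : ℝ) 1) (ha : 0 < a)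
    (hx : 0 < x) : PD β₁ β₂ x a ∈ Icc 0 1 := by
  have hax : (0 : ℝ) ≤ a / x := (div_pos ha hx).le
  have hC := gamma_mul_gamma_pos hs
  rw [eq_shiftedRpowIntegral]
  refine ⟨mul_nonneg (inv_nonneg.2 hC.le) (shiftedRpowIntegral.nonneg weight_nonneg hax),
    inv_mul_le_one_of_le₀ ?_ hC.le⟩
  rw [← shiftedRpowIntegral_zero hs]
  exact antitoneOn_shiftedRpowIntegral hβ₁ hs self_mem_Ici hax hax

lemma monotoneOn (hβ₁ : β₁ < 1) (hs : β₁ + β₂ - 1 ∈ Ioo (0 : ℝ) 1) (ha : 0 < a) :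
    MonotoneOn (fun x => PD β₁ β₂ x a) (Ioi 0) := by
  intro x (hx : 0 < x) y (hy : 0 < y) hxy
  simp only [eq_shiftedRpowIntegral]
  gcongr ?_ * ?_
  · exact inv_nonneg.2 (gamma_mul_gamma_pos hs).le
  · exact antitoneOn_shiftedRpowIntegral hβ₁ hs (div_pos ha hy).le (div_pos ha hx).le
      (div_le_div_of_nonneg_left ha.le hx hxy)

lemma tendsto_nhdsGT_zero (hβ₁ : β₁ < 1) (hs : β₁ + β₂ - 1 ∈ Ioo (0 : ℝ) 1)
    (ha : 0 < a) : Tendsto (fun x => PD β₁ β₂ x a) (𝓝[>] 0) (𝓝 0) := by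
  have hax : Tendsto (fun x : ℝ => a / x) (𝓝[>] 0) atTop := by
    simpa only [div_eq_mul_inv] using tendsto_inv_nhdsGT_zero.const_mul_atTop ha
  simp only [eq_shiftedRpowIntegral]
  simpa using ((shiftedRpowIntegral.tendsto_atTop (by linarith) measurable_weight
    weight_nonneg (intervalIntegrable_rpow_mul_weight hs)).comp hax).const_mul _

lemma tendsto_atTop (hβ₁ : β₁ < 1) (hs : β₁ + β₂ - 1 ∈ Ioo (0 : ℝ) 1)
    (ha : 0 < a) : Tendsto (fun x => PD β₁ β₂ x a) atTop (𝓝 1) := by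
  have hax : Tendsto (fun x : ℝ => a / x) atTop (𝓝[≥] 0) :=
    tendsto_nhdsWithin_iff.2 ⟨tendsto_const_nhds.div_atTop tendsto_id,
      (eventually_gt_atTop 0).mono fun x hx => (div_pos ha hx).le⟩
  have hG := ((continuousOn_shiftedRpowIntegral hβ₁ hs 0 self_mem_Ici).tendsto.comp hax).const_mul
    (Gamma (β₁ + β₂ - 1) * Gamma (1 - (β₁ + β₂ - 1)))⁻¹
  rw [shiftedRpowIntegral_zero hs, inv_mul_cancel₀ (gamma_mul_gamma_pos hs).ne'] at hG
  simp only [eq_shiftedRpowIntegral]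
  exact hG

lemma continuousAt (hβ₁ : β₁ < 1) (hs : β₁ + β₂ - 1 ∈ Ioo (0 : ℝ) 1)
    (ha : 0 < a) (hx : 0 < x) : ContinuousAt (fun x => PD β₁ β₂ x a) x := by
  simp only [eq_shiftedRpowIntegral]
  have hG := (continuousOn_shiftedRpowIntegral hβ₁ hs).continuousAt (Ici_mem_nhds (div_pos ha hx))
  exact (hG.comp (continuousAt_const.div continuousAt_id hx.ne')).const_mul _

end PD

theorem stmt6_general (β₁ β₂ a : ℝ) (h₁ : β₁ ∈ Set.Ioo (0 : ℝ) 1)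
    (h₁₂ : β₁ + β₂ - 1 ∈ Set.Ioo (0 : ℝ) 1) (ha : 0 < a) :
    (∀ x : ℝ, 0 < x → PD β₁ β₂ x a ∈ Set.Icc (0 : ℝ) 1) ∧
    (∀ x y : ℝ, 0 < x → x ≤ y → PD β₁ β₂ x a ≤ PD β₁ β₂ y a) ∧
    Tendsto (fun x => PD β₁ β₂ x a) (𝓝[>] (0 : ℝ)) (𝓝 0) ∧
    Tendsto (fun x => PD β₁ β₂ x a) atTop (𝓝 1) ∧
    ∃ μ : Measure ℝ, IsProbabilityMeasure μ ∧ μ (Set.Ioi (0 : ℝ))ᶜ = 0 ∧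
      ∀ x : ℝ, 0 < x → μ (Set.Iic x) = ENNReal.ofReal (PD β₁ β₂ x a) := by
  have hβ₁ : β₁ < 1 := h₁.2
  have hmono := PD.monotoneOn hβ₁ h₁₂ ha
  have h0 := PD.tendsto_nhdsGT_zero hβ₁ h₁₂ ha
  have h1 := PD.tendsto_atTop hβ₁ h₁₂ ha
  refine ⟨fun x hx => PD.mem_Icc hβ₁ h₁₂ ha hx,
    fun x y hx hxy => hmono hx (hx.trans_le hxy) hxy, h0, h1, ?_⟩
  exact exists_isProbabilityMeasure_measure_Iic_eq hmono
    (fun x hx => (PD.continuousAt hβ₁ h₁₂ ha hx).continuousWithinAt) h0 h1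

/-- For `β₁, β₂ ∈ (0,1)` with `β₁₂ = β₁+β₂−1 ∈ (0,1)` and `a > 0`, the function
`x ↦ P_D^{β₁,β₂}(x ∣ a)` on `(0,∞)` takes values in `[0,1]`, is nondecreasing,
tends to `0` at `0+` and to `1` at `∞`; in particular it is the cumulative
distribution function of a probability measure concentrated on `(0,∞)`. -/
theorem stmt6 (β₁ β₂ a : ℝ) (h₁ : β₁ ∈ Set.Ioo (0 : ℝ) 1) (h₂ : β₂ ∈ Set.Ioo (0 : ℝ) 1)
    (h₁₂ : β₁ + β₂ - 1 ∈ Set.Ioo (0 : ℝ) 1) (ha : 0 < a) :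
    (∀ x : ℝ, 0 < x → PD β₁ β₂ x a ∈ Set.Icc (0 : ℝ) 1) ∧
    (∀ x y : ℝ, 0 < x → x ≤ y → PD β₁ β₂ x a ≤ PD β₁ β₂ y a) ∧
    Tendsto (fun x => PD β₁ β₂ x a) (𝓝[>] (0 : ℝ)) (𝓝 0) ∧
    Tendsto (fun x => PD β₁ β₂ x a) atTop (𝓝 1) ∧
    ∃ μ : Measure ℝ, IsProbabilityMeasure μ ∧ μ (Set.Ioi (0 : ℝ))ᶜ = 0 ∧
      ∀ x : ℝ, 0 < x → μ (Set.Iic x) = ENNReal.ofReal (PD β₁ β₂ x a) :=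
  stmt6_general β₁ β₂ a h₁ h₁₂ ha
end

section
/- Let β₁, β₂ ∈ (0,1) with β* := β₁ + β₂ − 1 ∈ (0,1). Then for every x ∈ (0,1], ∫_0^x (1−β₁) y₁^{−β₁} [ ∫_0^{y₁} (1−β₂) y₂^{−β₂} P_D^{β₂,β₁}(x−y₁ | y₁−y₂) dy₂ ] dy₁ + ∫_0^x (1−β₁) y₁^{−β₁} [ ∫_{y₁}^x (1−β₂) y₂^{−β₂} P_D^{β₁,β₂}(x−y₂ | y₂−y₁) dy₂ ] dy₁ = x^{1−β*} · Γ(β₁)Γ(2−β₁)Γ(β₂)Γ(2−β₂) / (Γ(β*)Γ(2−β*)). -/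
open MeasureTheory Real

/-!
The substitution `t = v + (w - v) y` writes `P_D^{γ,β}(w - v ∣ v - u)` as an integral over
`t ∈ (v, w)`. After it, both summands integrate the same nonnegative kernel `pdKernel`,
`y₂^{-β₂} (t - y₂)^{β₂-1} (t - y₁)^{β₁-1} (x - t)^{-β*}`, over the two pieces
`0 < y₂ ≤ y₁ < t ≤ x` and `y₁ < y₂ < t ≤ x` of the region `{0 < y₂ < t, y₁ < t ≤ x}`.
By Tonelli one may integrate over `y₂ ∈ (0, t)` first, which gives `B(1 - β₂, β₂)`; the
`t`-integral then gives `B(β₁, 1 - β*) (x - y₁)^{1 - β₂}`, and the outer integral is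
`B(1 - β₁, 2 - β₂) x^{1 - β*}`. Working with lower Lebesgue integrals makes the interchanges
unconditional, and the finiteness needed to return to Bochner integrals comes from the
computed value.
-/

open Set ProbabilityTheory
open scoped ENNReal

theorem lintegral_rpow_mul_one_sub_rpow {p q : ℝ} (hp : 0 < p) (hq : 0 < q) :
    ∫⁻ s in Ioo (0 : ℝ) 1, ENNReal.ofReal (s ^ (p - 1) * (1 - s) ^ (q - 1)) =
      ENNReal.ofReal (beta p q) := by
  have hB := beta_pos hp hq
  have h := lintegral_betaPDF_eq_one hp hq
  simp_rw [lintegral_betaPDF, mul_assoc, ENNReal.ofReal_mul (one_div_pos.2 hB).le] at h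
  rw [lintegral_const_mul' _ _ ENNReal.ofReal_ne_top, one_div, ENNReal.ofReal_inv_of_pos hB,
    mul_comm] at h
  rw [ENNReal.eq_inv_of_mul_eq_one_left h, inv_inv]

theorem lintegral_sub_rpow_mul_sub_rpow {p q a c : ℝ} (hp : -1 < p) (hq : -1 < q)
    (hac : a < c) :
    ∫⁻ t in Ioo a c, ENNReal.ofReal ((t - a) ^ p * (c - t) ^ q) =
      ENNReal.ofReal ((c - a) ^ (p + q + 1) * beta (p + 1) (q + 1)) := by
  have hca : 0 < c - a := sub_pos.2 hac
  have himage : (fun y => (c - a) * y + a) '' Ioo 0 1 = Ioo a c := by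
    rw [image_affine_Ioo hca]; simp
  rw [← himage, lintegral_image_eq_lintegral_abs_deriv_mul measurableSet_Ioo
      (fun y _ => (((hasDerivAt_id' y).const_mul (c - a)).add_const a).hasDerivWithinAt)
      (fun y _ z _ h => by simpa [hca.ne'] using h),
    ENNReal.ofReal_mul (by positivity), ← lintegral_rpow_mul_one_sub_rpow (by linarith)
      (by linarith), ← lintegral_const_mul' _ _ ENNReal.ofReal_ne_top]
  refine setLIntegral_congr_fun measurableSet_Ioo fun y hy => ?_
  rw [← ENNReal.ofReal_mul (by positivity), ← ENNReal.ofReal_mul (by positivity)]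
  congr 1
  have e₁ : (c - a) * y + a - a = (c - a) * y := by ring
  have e₂ : c - ((c - a) * y + a) = (c - a) * (1 - y) := by ring
  rw [mul_one, abs_of_pos hca, e₁, e₂, mul_rpow hca.le hy.1.le,
    mul_rpow hca.le (by linarith [hy.2]), rpow_add hca, rpow_add hca, rpow_one,
    add_sub_cancel_right, add_sub_cancel_right]
  ring

theorem integral_sub_rpow_mul_sub_rpow {p q a c : ℝ} (hp : -1 < p) (hq : -1 < q)
    (hac : a < c) :
    ∫ t in Ioo a c, (t - a) ^ p * (c - t) ^ q =
      (c - a) ^ (p + q + 1) * beta (p + 1) (q + 1) := by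
  rw [integral_eq_lintegral_of_nonneg_ae, lintegral_sub_rpow_mul_sub_rpow hp hq hac,
    ENNReal.toReal_ofReal]
  · exact mul_nonneg (rpow_nonneg (by linarith) _) (beta_pos (by linarith) (by linarith)).le
  · filter_upwards [ae_restrict_mem measurableSet_Ioo] with t ht
    exact mul_nonneg (rpow_nonneg (by linarith [ht.1]) _) (rpow_nonneg (by linarith [ht.2]) _)
  · exact (by fun_prop : Measurable fun t : ℝ => (t - a) ^ p * (c - t) ^ q).aestronglyMeasurable

theorem integrableOn_sub_rpow_mul_sub_rpow {p q a c : ℝ} (hp : -1 < p) (hq : -1 < q)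
    (hac : a < c) : IntegrableOn (fun t => (t - a) ^ p * (c - t) ^ q) (Ioo a c) := by
  refine Integrable.of_integral_ne_zero ?_
  rw [integral_sub_rpow_mul_sub_rpow hp hq hac]
  exact (mul_pos (rpow_pos_of_pos (by linarith) _) (beta_pos (by linarith) (by linarith))).ne'

theorem integral_integral_eq_toReal_lintegral {α β : Type*} [MeasurableSpace α]
    [MeasurableSpace β] {μ : Measure α} {ν : Measure β} [SFinite μ] [SFinite ν] {s : Set α}
    {t : Set β} (hs : MeasurableSet s) (ht : MeasurableSet t) {f : α → β → ℝ}
    (hf : Measurable (Function.uncurry f)) (hf₀ : ∀ x ∈ s, ∀ y ∈ t, 0 ≤ f x y)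
    (hfin : ∫⁻ x in s, ∫⁻ y in t, ENNReal.ofReal (f x y) ∂ν ∂μ ≠ ∞) :
    ∫ x in s, ∫ y in t, f x y ∂ν ∂μ =
      (∫⁻ x in s, ∫⁻ y in t, ENNReal.ofReal (f x y) ∂ν ∂μ).toReal := by
  have h₀ : 0 ≤ᵐ[(μ.restrict s).prod (ν.restrict t)] Function.uncurry f := by
    rw [Measure.prod_restrict]
    exact (ae_restrict_iff' (hs.prod ht)).2 (.of_forall fun z hz => hf₀ z.1 hz.1 z.2 hz.2)
  have htonelli := lintegral_prod _ hf.ennreal_ofReal.aemeasurable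
    (μ := μ.restrict s) (ν := ν.restrict t)
  have hint : Integrable (Function.uncurry f) ((μ.restrict s).prod (ν.restrict t)) :=
    ⟨hf.aestronglyMeasurable, (hasFiniteIntegral_iff_ofReal h₀).2 (htonelli ▸ hfin.lt_top)⟩
  have hfubini := integral_prod _ hint
  simp only [Function.uncurry_apply_pair] at htonelli hfubini
  rw [← hfubini, integral_eq_lintegral_of_nonneg_ae h₀ hf.aestronglyMeasurable, htonelli]

theorem lintegral_Ioc_add_lintegral_indicator_Ioi {f : ℝ → ℝ → ℝ≥0∞}
    (hf : Measurable (Function.uncurry f)) {a b c : ℝ} (hab : a ≤ b) :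
    (∫⁻ y in Ioc a b, ∫⁻ t in Ioc b c, f y t) +
        ∫⁻ y in Ioo b c, ∫⁻ t in Ioc b c, (Ioi y).indicator (f y) t =
      ∫⁻ t in Ioc b c, ∫⁻ y in Ioo a t, f y t := by
  have hind : Measurable (Function.uncurry fun y t => (Ioi y).indicator (f y) t) :=
    hf.indicator (measurableSet_lt measurable_fst measurable_snd)
  rw [lintegral_lintegral_swap hf.aemeasurable, lintegral_lintegral_swap hind.aemeasurable,
    ← lintegral_add_left (f := fun t => ∫⁻ y in Ioc a b, f y t) hf.lintegral_prod_left']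
  refine setLIntegral_congr_fun measurableSet_Ioc fun t ht => ?_
  have hslice : ∫⁻ y in Ioo b c, (Ioi y).indicator (f y) t = ∫⁻ y in Ioo b t, f y t := by
    have hIoo : Iio t ∩ Ioo b c = Ioo b t := by
      ext y
      simp only [mem_inter_iff, mem_Iio, mem_Ioo]
      exact ⟨fun h => ⟨h.2.1, h.1⟩, fun h => ⟨h.2, h.1, h.2.trans_le ht.2⟩⟩
    rw [← hIoo, ← Measure.restrict_restrict measurableSet_Iio,
      ← lintegral_indicator measurableSet_Iio]
    rfl
  rw [hslice, ← lintegral_union measurableSet_Ioo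
      (Ioc_disjoint_Ioi_same.mono_right Ioo_subset_Ioi_self), Ioc_union_Ioo_eq_Ioo hab ht.1]

theorem integral_add_of_nonneg {α : Type*} [MeasurableSpace α] {μ : Measure α}
    {u v : α → ℝ} (hu : 0 ≤ᵐ[μ] u) (hv : 0 ≤ᵐ[μ] v) (hum : AEStronglyMeasurable u μ)
    (hvm : AEStronglyMeasurable v μ) (huv : Integrable (fun a => u a + v a) μ) :
    ∫ a, u a ∂μ + ∫ a, v a ∂μ = ∫ a, u a + v a ∂μ := by
  refine (integral_add (huv.mono' hum ?_) (huv.mono' hvm ?_)).symm <;>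
  · filter_upwards [hu, hv] with a (hua : 0 ≤ u a) (hva : 0 ≤ v a)
    rw [Real.norm_eq_abs]
    exact abs_le.2 ⟨by linarith, by linarith⟩

theorem intervalIntegral_rpow_mul_add_eq_beta {p q c C x : ℝ} {I₁ I₂ : ℝ → ℝ} (hp : -1 < p)
    (hq : -1 < q) (hc : 0 ≤ c) (hx : 0 < x) (hI₁ : Measurable I₁) (hI₂ : Measurable I₂)
    (hI₁₀ : ∀ y ∈ Ioo 0 x, 0 ≤ I₁ y) (hI₂₀ : ∀ y ∈ Ioo 0 x, 0 ≤ I₂ y)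
    (hsum : ∀ y ∈ Ioo 0 x, I₁ y + I₂ y = C * (x - y) ^ q) :
    (∫ y in (0 : ℝ)..x, c * y ^ p * I₁ y) + ∫ y in (0 : ℝ)..x, c * y ^ p * I₂ y =
      c * C * (x ^ (p + q + 1) * beta (p + 1) (q + 1)) := by
  have hweighted : ∀ y ∈ Ioo 0 x,
      c * y ^ p * I₁ y + c * y ^ p * I₂ y = c * C * (y ^ p * (x - y) ^ q) := fun y hy => by
    rw [← mul_add, hsum y hy]; ring
  have hbeta := integral_sub_rpow_mul_sub_rpow hp hq hx
  have hint := integrableOn_sub_rpow_mul_sub_rpow hp hq hx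
  simp only [sub_zero] at hbeta hint
  have hnonneg : ∀ {I : ℝ → ℝ}, (∀ y ∈ Ioo 0 x, 0 ≤ I y) →
      0 ≤ᵐ[volume.restrict (Ioo 0 x)] fun y => c * y ^ p * I y := fun hI =>
    (ae_restrict_iff' measurableSet_Ioo).2 (.of_forall fun y hy =>
      mul_nonneg (mul_nonneg hc (rpow_nonneg hy.1.le _)) (hI y hy))
  rw [intervalIntegral.integral_of_le hx.le, intervalIntegral.integral_of_le hx.le,
    integral_Ioc_eq_integral_Ioo, integral_Ioc_eq_integral_Ioo,
    integral_add_of_nonneg (hnonneg hI₁₀) (hnonneg hI₂₀) (by fun_prop) (by fun_prop)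
      (IntegrableOn.congr_fun (hint.const_mul (c * C)) (fun y hy => (hweighted y hy).symm)
        measurableSet_Ioo),
    setIntegral_congr_fun measurableSet_Ioo hweighted, integral_const_mul, hbeta]

theorem Measurable.intervalIntegral_of_uncurry {α : Type*} [MeasurableSpace α]
    {f : α → ℝ → ℝ} (hf : Measurable (Function.uncurry f)) {a b : α → ℝ} (ha : Measurable a)
    (hb : Measurable b) : Measurable fun z => ∫ y in a z..b z, f z y := by
  have hIoc : ∀ {a b : α → ℝ}, Measurable a → Measurable b →
      Measurable fun z => ∫ y in Ioc (a z) (b z), f z y := by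
    intro a b ha hb
    have hs : MeasurableSet {p : α × ℝ | p.2 ∈ Ioc (a p.1) (b p.1)} :=
      (measurableSet_lt (ha.comp measurable_fst) measurable_snd).inter
        (measurableSet_le measurable_snd (hb.comp measurable_fst))
    convert ((hf.indicator hs).stronglyMeasurable.integral_prod_right'
      (ν := (volume : Measure ℝ))).measurable using 2 with z
    rw [← integral_indicator measurableSet_Ioc]
    rfl
  exact (hIoc ha hb).sub (hIoc hb ha)

theorem PD_sub_sub_eq_integral {γ β u v w : ℝ} (huv : u ≤ v) (hvw : v < w) :
    PD γ β (w - v) (v - u) = (Gamma (γ + β - 1) * Gamma (1 - (γ + β - 1)))⁻¹ *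
      ∫ t in v..w, (t - u) ^ (γ - 1) * (t - v) ^ (β - 1) * (w - t) ^ (-(γ + β - 1)) := by
  have hX : 0 < w - v := sub_pos.2 hvw
  have hsubst := intervalIntegral.integral_comp_mul_add (a := 0) (b := 1)
    (fun t : ℝ => (t - u) ^ (γ - 1) * (t - v) ^ (β - 1) * (w - t) ^ (-(γ + β - 1))) hX.ne' v
  rw [mul_zero, zero_add, mul_one, sub_add_cancel, smul_eq_mul] at hsubst
  rw [PD, ← mul_inv_cancel_left₀ hX.ne' (∫ t in v..w, _), ← hsubst,
    ← intervalIntegral.integral_const_mul (w - v)]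
  congr 1
  refine intervalIntegral.integral_congr fun y hy => ?_
  rw [uIcc_of_le zero_le_one] at hy
  have hpow : (w - v) * ((w - v) ^ (γ - 1) * (w - v) ^ (β - 1) * (w - v) ^ (-(γ + β - 1))) =
      1 := by
    rw [← rpow_add hX, ← rpow_add hX, show γ - 1 + (β - 1) + -(γ + β - 1) = -1 by ring,
      rpow_neg_one, mul_inv_cancel₀ hX.ne']
  have e₁ : (w - v) * y + v - u = (w - v) * ((v - u) / (w - v) + y) := by field_simp; ring
  have e₂ : (w - v) * y + v - v = (w - v) * y := by ring
  have e₃ : w - ((w - v) * y + v) = (w - v) * (1 - y) := by ring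
  have hA : 0 ≤ (v - u) / (w - v) := div_nonneg (sub_nonneg.2 huv) hX.le
  simp only [e₁, e₂, e₃]
  rw [mul_rpow hX.le (by linarith [hy.1]), mul_rpow hX.le hy.1,
    mul_rpow hX.le (by linarith [hy.2])]
  linear_combination
    (((v - u) / (w - v) + y) ^ (γ - 1) * y ^ (β - 1) * (1 - y) ^ (-(γ + β - 1))) * hpow.symm

theorem PD_nonneg (γ β : ℝ) {X A : ℝ} (hX : 0 ≤ X) (hA : 0 ≤ A) (hs₀ : 0 < γ + β - 1)
    (hs₁ : γ + β - 1 < 1) : 0 ≤ PD γ β X A := by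
  refine mul_nonneg (inv_nonneg.2 (mul_nonneg (Gamma_pos_of_pos hs₀).le
    (Gamma_pos_of_pos (by linarith)).le))
    (intervalIntegral.integral_nonneg zero_le_one fun y hy => ?_)
  have := div_nonneg hA hX
  have := hy.1
  have := hy.2
  positivity

@[fun_prop]
theorem measurable_PD (γ β : ℝ) : Measurable fun p : ℝ × ℝ => PD γ β p.1 p.2 :=
  (Measurable.intervalIntegral_of_uncurry (by fun_prop) measurable_const
    measurable_const).const_mul _

section InnerIntegrals

variable {β₁ β₂ x y₁ : ℝ}

noncomputable def pdKernel (β₁ β₂ x y₁ y₂ t : ℝ) : ℝ :=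
  y₂ ^ (-β₂) * (t - y₂) ^ (β₂ - 1) * ((t - y₁) ^ (β₁ - 1) * (x - t) ^ (-(β₁ + β₂ - 1)))

theorem measurable_pdKernel : Measurable (Function.uncurry (pdKernel β₁ β₂ x y₁)) := by
  unfold pdKernel
  fun_prop

theorem pdKernel_nonneg {y₂ t : ℝ} (h₀ : 0 ≤ y₂) (hy₂t : y₂ ≤ t) (hy₁t : y₁ ≤ t) (htx : t ≤ x) :
    0 ≤ pdKernel β₁ β₂ x y₁ y₂ t :=
  mul_nonneg (mul_nonneg (rpow_nonneg h₀ _) (rpow_nonneg (sub_nonneg.2 hy₂t) _))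
    (mul_nonneg (rpow_nonneg (sub_nonneg.2 hy₁t) _) (rpow_nonneg (sub_nonneg.2 htx) _))

theorem integral_PD_below_eq (hy₁ : 0 < y₁) (hy₁x : y₁ < x) :
    ∫ y₂ in (0 : ℝ)..y₁, (1 - β₂) * y₂ ^ (-β₂) * PD β₂ β₁ (x - y₁) (y₁ - y₂) =
      (1 - β₂) * (Gamma (β₁ + β₂ - 1) * Gamma (1 - (β₁ + β₂ - 1)))⁻¹ *
        ∫ y₂ in Ioc 0 y₁, ∫ t in Ioc y₁ x, pdKernel β₁ β₂ x y₁ y₂ t := by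
  rw [intervalIntegral.integral_of_le hy₁.le, ← integral_const_mul]
  refine setIntegral_congr_fun measurableSet_Ioc fun y₂ hy₂ => ?_
  rw [PD_sub_sub_eq_integral hy₂.2 hy₁x, intervalIntegral.integral_of_le hy₁x.le,
    add_comm β₂ β₁]
  simp_rw [← integral_const_mul]
  exact setIntegral_congr_fun measurableSet_Ioc fun t _ => by rw [pdKernel]; ring

theorem integral_PD_above_eq (hy₁x : y₁ < x) :
    ∫ y₂ in y₁..x, (1 - β₂) * y₂ ^ (-β₂) * PD β₁ β₂ (x - y₂) (y₂ - y₁) =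
      (1 - β₂) * (Gamma (β₁ + β₂ - 1) * Gamma (1 - (β₁ + β₂ - 1)))⁻¹ *
        ∫ y₂ in Ioo y₁ x, ∫ t in Ioc y₁ x, (Ioi y₂).indicator (pdKernel β₁ β₂ x y₁ y₂) t := by
  rw [intervalIntegral.integral_of_le hy₁x.le, integral_Ioc_eq_integral_Ioo,
    ← integral_const_mul]
  refine setIntegral_congr_fun measurableSet_Ioo fun y₂ hy₂ => ?_
  rw [PD_sub_sub_eq_integral hy₂.1.le hy₂.2, intervalIntegral.integral_of_le hy₂.2.le,
    setIntegral_indicator measurableSet_Ioi, Ioc_inter_Ioi, max_eq_right hy₂.1.le]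
  simp_rw [← integral_const_mul]
  exact setIntegral_congr_fun measurableSet_Ioc fun t _ => by rw [pdKernel]; ring

theorem lintegral_pdKernel (hβ₁ : 0 < β₁) (hβ₂₀ : 0 < β₂) (hβ₂₁ : β₂ < 1)
    (hb : β₁ + β₂ - 1 < 1) (hy₁ : 0 < y₁) (hy₁x : y₁ < x) :
    (∫⁻ y₂ in Ioc 0 y₁, ∫⁻ t in Ioc y₁ x, ENNReal.ofReal (pdKernel β₁ β₂ x y₁ y₂ t)) +
        ∫⁻ y₂ in Ioo y₁ x, ∫⁻ t in Ioc y₁ x,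
          ENNReal.ofReal ((Ioi y₂).indicator (pdKernel β₁ β₂ x y₁ y₂) t) =
      ENNReal.ofReal
        (beta (1 - β₂) β₂ * ((x - y₁) ^ (1 - β₂) * beta β₁ (1 - (β₁ + β₂ - 1)))) := by
  have hinner : ∀ t, 0 < t →
      ∫⁻ y₂ in Ioo 0 t, ENNReal.ofReal (y₂ ^ (-β₂) * (t - y₂) ^ (β₂ - 1)) =
        ENNReal.ofReal (beta (1 - β₂) β₂) := fun t ht => by
    have h := lintegral_sub_rpow_mul_sub_rpow (a := 0) (by linarith : -1 < -β₂)
      (by linarith : -1 < β₂ - 1) ht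
    simp only [sub_zero] at h
    rw [h, show -β₂ + (β₂ - 1) + 1 = 0 by ring, rpow_zero, one_mul,
      show -β₂ + 1 = 1 - β₂ by ring, sub_add_cancel]
  have hind : ∀ y₂ t, ENNReal.ofReal ((Ioi y₂).indicator (pdKernel β₁ β₂ x y₁ y₂) t) =
      (Ioi y₂).indicator (fun t => ENNReal.ofReal (pdKernel β₁ β₂ x y₁ y₂ t)) t :=
    fun y₂ t => by by_cases h : t ∈ Ioi y₂ <;> simp [h]
  simp only [hind]
  rw [lintegral_Ioc_add_lintegral_indicator_Ioi
    (f := fun y₂ t => ENNReal.ofReal (pdKernel β₁ β₂ x y₁ y₂ t))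
    measurable_pdKernel.ennreal_ofReal hy₁.le]
  calc ∫⁻ t in Ioc y₁ x, ∫⁻ y₂ in Ioo 0 t, ENNReal.ofReal (pdKernel β₁ β₂ x y₁ y₂ t)
      = ∫⁻ t in Ioc y₁ x, ENNReal.ofReal (beta (1 - β₂) β₂) *
          ENNReal.ofReal ((t - y₁) ^ (β₁ - 1) * (x - t) ^ (-(β₁ + β₂ - 1))) := by
        refine setLIntegral_congr_fun measurableSet_Ioc fun t ht => ?_
        rw [← hinner t (by linarith [ht.1]), ← lintegral_mul_const' _ _ ENNReal.ofReal_ne_top]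
        refine setLIntegral_congr_fun measurableSet_Ioo fun y₂ hy₂ => ?_
        rw [pdKernel, ENNReal.ofReal_mul (mul_nonneg (rpow_nonneg hy₂.1.le _)
          (rpow_nonneg (by linarith [hy₂.2]) _))]
    _ = _ := by
        rw [lintegral_const_mul' _ _ ENNReal.ofReal_ne_top,
          setLIntegral_congr Ioo_ae_eq_Ioc.symm,
          lintegral_sub_rpow_mul_sub_rpow (by linarith) (by linarith) hy₁x,
          show β₁ - 1 + -(β₁ + β₂ - 1) + 1 = 1 - β₂ by ring, sub_add_cancel,
          show -(β₁ + β₂ - 1) + 1 = 1 - (β₁ + β₂ - 1) by ring,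
          ← ENNReal.ofReal_mul (beta_pos (by linarith) hβ₂₀).le]

theorem integral_PD_below_add_integral_PD_above (hβ₁ : 0 < β₁) (hβ₂₀ : 0 < β₂)
    (hβ₂₁ : β₂ < 1) (hb : β₁ + β₂ - 1 < 1) (hy₁ : 0 < y₁) (hy₁x : y₁ < x) :
    (∫ y₂ in (0 : ℝ)..y₁, (1 - β₂) * y₂ ^ (-β₂) * PD β₂ β₁ (x - y₁) (y₁ - y₂)) +
        ∫ y₂ in y₁..x, (1 - β₂) * y₂ ^ (-β₂) * PD β₁ β₂ (x - y₂) (y₂ - y₁) =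
      Gamma β₁ * Gamma β₂ / Gamma (β₁ + β₂ - 1) * (x - y₁) ^ (1 - β₂) := by
  have hlin := lintegral_pdKernel hβ₁ hβ₂₀ hβ₂₁ hb hy₁ hy₁x
  have hfin₁ := ne_top_of_le_ne_top (hlin ▸ ENNReal.ofReal_ne_top) le_self_add
  have hfin₂ := ne_top_of_le_ne_top (hlin ▸ ENNReal.ofReal_ne_top) le_add_self
  have hind : Measurable (Function.uncurry fun y₂ t =>
      (Ioi y₂).indicator (pdKernel β₁ β₂ x y₁ y₂) t) :=
    measurable_pdKernel.indicator (measurableSet_lt measurable_fst measurable_snd)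
  rw [integral_PD_below_eq hy₁ hy₁x, integral_PD_above_eq hy₁x, ← mul_add,
    integral_integral_eq_toReal_lintegral measurableSet_Ioc measurableSet_Ioc
      measurable_pdKernel ?_ hfin₁,
    integral_integral_eq_toReal_lintegral measurableSet_Ioo measurableSet_Ioc hind ?_ hfin₂,
    ← ENNReal.toReal_add hfin₁ hfin₂, hlin, ENNReal.toReal_ofReal]
  · have hΓ : Gamma (β₁ + (1 - (β₁ + β₂ - 1))) = (1 - β₂) * Gamma (1 - β₂) := by
      rw [show β₁ + (1 - (β₁ + β₂ - 1)) = 1 - β₂ + 1 by ring, Gamma_add_one (by linarith)]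
    have := Gamma_pos_of_pos (by linarith : 0 < 1 - β₂)
    have := Gamma_pos_of_pos (by linarith : 0 < 1 - (β₁ + β₂ - 1))
    have : 1 - β₂ ≠ 0 := by linarith
    simp only [beta, sub_add_cancel, Gamma_one, div_one, hΓ]
    field_simp
  · have := hy₁x.le
    exact mul_nonneg (beta_pos (by linarith) hβ₂₀).le
      (mul_nonneg (by positivity) (beta_pos hβ₁ (by linarith)).le)
  · intro y₂ hy₂ t ht
    by_cases hy₂t : t ∈ Ioi y₂
    · rw [indicator_of_mem hy₂t]
      exact pdKernel_nonneg (by linarith [hy₂.1]) (le_of_lt hy₂t) ht.1.le ht.2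
    · rw [indicator_of_notMem hy₂t]
  · exact fun y₂ hy₂ t ht =>
      pdKernel_nonneg hy₂.1.le (by linarith [hy₂.2, ht.1]) ht.1.le ht.2

end InnerIntegrals

/-- The double-integral computation from the proof of Corollary `coro:1`
(case `ℓ = 2`): for `x ∈ (0,1]`, the sum of the two double integrals equals
`x^{1−β*} Γ(β₁)Γ(2−β₁)Γ(β₂)Γ(2−β₂) / (Γ(β*)Γ(2−β*))`, `β* = β₁+β₂−1`. -/
theorem stmt9 (β₁ β₂ : ℝ) (h₁ : β₁ ∈ Set.Ioo (0 : ℝ) 1) (h₂ : β₂ ∈ Set.Ioo (0 : ℝ) 1)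
    (hs : β₁ + β₂ - 1 ∈ Set.Ioo (0 : ℝ) 1) (x : ℝ) (hx : x ∈ Set.Ioc (0 : ℝ) 1) :
    (∫ y₁ in (0 : ℝ)..x, (1 - β₁) * y₁ ^ (-β₁) *
        ∫ y₂ in (0 : ℝ)..y₁, (1 - β₂) * y₂ ^ (-β₂) * PD β₂ β₁ (x - y₁) (y₁ - y₂)) +
      (∫ y₁ in (0 : ℝ)..x, (1 - β₁) * y₁ ^ (-β₁) *
        ∫ y₂ in y₁..x, (1 - β₂) * y₂ ^ (-β₂) * PD β₁ β₂ (x - y₂) (y₂ - y₁)) =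
    x ^ (1 - (β₁ + β₂ - 1)) *
      (Gamma β₁ * Gamma (2 - β₁) * Gamma β₂ * Gamma (2 - β₂)) /
      (Gamma (β₁ + β₂ - 1) * Gamma (2 - (β₁ + β₂ - 1))) := by
  obtain ⟨hβ₁₀, hβ₁₁⟩ := h₁
  obtain ⟨hβ₂₀, hβ₂₁⟩ := h₂
  obtain ⟨hb₀, hb₁⟩ := hs
  have hPD : ∀ {γ β X A}, γ + β = β₁ + β₂ → 0 ≤ X → 0 ≤ A → 0 ≤ PD γ β X A :=
    fun _ hX hA => PD_nonneg _ _ hX hA (by linarith) (by linarith)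
  rw [intervalIntegral_rpow_mul_add_eq_beta (by linarith) (by linarith) (by linarith) hx.1
    (Measurable.intervalIntegral_of_uncurry (by fun_prop) measurable_const measurable_id')
    (Measurable.intervalIntegral_of_uncurry (by fun_prop) measurable_id' measurable_const)
    (fun y₁ hy₁ => intervalIntegral.integral_nonneg hy₁.1.le fun y₂ hy₂ =>
      mul_nonneg (mul_nonneg (by linarith) (rpow_nonneg hy₂.1 _))
        (hPD (add_comm _ _) (by linarith [hy₁.2]) (by linarith [hy₂.2])))
    (fun y₁ hy₁ => intervalIntegral.integral_nonneg hy₁.2.le fun y₂ hy₂ =>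
      mul_nonneg (mul_nonneg (by linarith) (rpow_nonneg (by linarith [hy₁.1, hy₂.1]) _))
        (hPD rfl (by linarith [hy₂.2]) (by linarith [hy₂.1])))
    (fun y₁ hy₁ => integral_PD_below_add_integral_PD_above hβ₁₀ hβ₂₀ hβ₂₁ hb₁ hy₁.1 hy₁.2)]
  have hΓ₁ : Gamma (2 - β₁) = (1 - β₁) * Gamma (1 - β₁) := by
    rw [show 2 - β₁ = 1 - β₁ + 1 by ring, Gamma_add_one (by linarith)]
  have := Gamma_pos_of_pos hb₀
  have := Gamma_pos_of_pos (by linarith : 0 < 2 - (β₁ + β₂ - 1))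
  rw [beta, show -β₁ + (1 - β₂) + 1 = 1 - (β₁ + β₂ - 1) by ring, show -β₁ + 1 = 1 - β₁ by ring,
    show 1 - β₂ + 1 = 2 - β₂ by ring, show 1 - β₁ + (2 - β₂) = 2 - (β₁ + β₂ - 1) by ring, hΓ₁]
  field_simp
end
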